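/- arXiv:0811.3801 — 5 statements merged into one kernel-verified Lean document; each statement's English description precedes it below -/
import Mathlib

section
/- In the commutative polynomial algebra ℚ[z_α] on indeterminates z_α indexed by compositions α, modulo the multiplication relations z_α z_β = z_{α·β} + z_{α⊙β} (where α·β is concatenation of compositions and α⊙β merges the last part of α with the first part of β), the set of relations EE: z_{2x} = z_{(2x-1)1} - z_{(2x-2)2} + ⋯ - z_{2(2x-2)} + z_{1(2x-1)} for all x ≥ 1 is equivalent to the set of relations EI: 2z_{2x} = z_{2x-1}z₁ - z_{2x-2}z₂ + ⋯ + z₁z_{2x-1} for all x ≥ 1. -/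
/-- A composition: a nonempty list of positive integers. -/
def IsComposition (α : List ℕ) : Prop := α ≠ [] ∧ ∀ a ∈ α, 0 < a

/-- `α ⊙ β`: add the last part of `α` to the first part of `β`. -/
def compNcat (α β : List ℕ) : List ℕ :=
  match α.reverse with
  | [] => β
  | a :: as =>
    match β with
    | [] => α
    | b :: bs => as.reverse ++ (a + b) :: bs

open MvPolynomial

/-- The indeterminate `z_α` in `ℚ[z_α]`. -/
noncomputable def z (α : List ℕ) : MvPolynomial (List ℕ) ℚ := MvPolynomial.X α

/-- The multiplication relations `z_α z_β = z_{α·β} + z_{α⊙β}`. -/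
def MultRels : Set (MvPolynomial (List ℕ) ℚ) :=
  {p | ∃ α β : List ℕ, IsComposition α ∧ IsComposition β ∧
    p = z α * z β - z (α ++ β) - z (compNcat α β)}

/-- The relations `EE`: `z_{2x} = z_{(2x-1)1} - z_{(2x-2)2} + ⋯ + z_{1(2x-1)}`. -/
def EERels : Set (MvPolynomial (List ℕ) ℚ) :=
  {p | ∃ x : ℕ, 1 ≤ x ∧
    p = z [2*x] - ∑ i ∈ Finset.Icc 1 (2*x - 1), (-1) ^ (i + 1) * z [2*x - i, i]}

/-- The relations `EI`: `2 z_{2x} = z_{2x-1} z₁ - z_{2x-2} z₂ + ⋯ + z₁ z_{2x-1}`. -/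
def EIRels : Set (MvPolynomial (List ℕ) ℚ) :=
  {p | ∃ x : ℕ, 1 ≤ x ∧
    p = 2 * z [2*x] - ∑ i ∈ Finset.Icc 1 (2*x - 1), (-1) ^ (i + 1) * z [2*x - i] * z [i]}

/-- The relations `T`: `z_x = z_{1^x}` for all `x ≥ 1`. -/
def TRels : Set (MvPolynomial (List ℕ) ℚ) :=
  {p | ∃ x : ℕ, 1 ≤ x ∧ p = z [x] - z (List.replicate x 1)}

/-- The relations `ET`: `z_{2x} = z_{1^{2x}}` for all `x ≥ 1`. -/
def ETRels : Set (MvPolynomial (List ℕ) ℚ) :=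
  {p | ∃ x : ℕ, 1 ≤ x ∧ p = z [2*x] - z (List.replicate (2*x) 1)}


lemma alt_sum_one (x : ℕ) (hx : 1 ≤ x) :
    ∑ i ∈ Finset.Icc 1 (2*x-1), ((-1 : MvPolynomial (List ℕ) ℚ))^(i+1) = 1 := by
  rw [show Finset.Icc 1 (2*x-1) = Finset.Ico 1 (2*x) by ext i; simp; omega,
    Finset.sum_Ico_eq_sum_range]
  have h : ∀ i, ((-1 : MvPolynomial (List ℕ) ℚ))^(1+i+1) = (-1)^i := by
    intro i; rw [show 1+i+1 = i+2 by omega, pow_add]; simp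
  simp only [h]
  rw [neg_one_geom_sum]
  simp [Nat.even_sub (by omega : 1 ≤ 2*x), Nat.even_iff, Nat.mul_mod_right]

lemma mult_mem_aux (x i : ℕ) (hx : 1 ≤ x) (hi : i ∈ Finset.Icc 1 (2*x-1)) :
    z [2*x - i] * z [i] - z [2*x - i, i] - z [2*x] ∈ MultRels := by
  simp only [Finset.mem_Icc] at hi
  refine ⟨[2*x - i], [i], ⟨by simp, by simp; omega⟩, ⟨by simp, by simp; omega⟩, ?_⟩
  have h1 : compNcat [2*x - i] [i] = [2*x - i + i] := rfl
  have h2 : 2*x - i + i = 2*x := by omega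
  rw [h1, h2]
  rfl

lemma key_identity (x : ℕ) (hx : 1 ≤ x) :
    z [2*x] - ∑ i ∈ Finset.Icc 1 (2*x - 1), (-1) ^ (i + 1) * z [2*x - i, i]
    = (2 * z [2*x] - ∑ i ∈ Finset.Icc 1 (2*x - 1), (-1) ^ (i + 1) * z [2*x - i] * z [i])
      + ∑ i ∈ Finset.Icc 1 (2*x - 1),
          (-1 : MvPolynomial (List ℕ) ℚ) ^ (i + 1) *
            (z [2*x - i] * z [i] - z [2*x - i, i] - z [2*x]) := by
  have hsplit : ∑ i ∈ Finset.Icc 1 (2*x - 1),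
      (-1 : MvPolynomial (List ℕ) ℚ) ^ (i + 1) *
        (z [2*x - i] * z [i] - z [2*x - i, i] - z [2*x])
      = (∑ i ∈ Finset.Icc 1 (2*x - 1), (-1) ^ (i + 1) * z [2*x - i] * z [i])
        - (∑ i ∈ Finset.Icc 1 (2*x - 1), (-1) ^ (i + 1) * z [2*x - i, i])
        - (∑ i ∈ Finset.Icc 1 (2*x - 1), ((-1 : MvPolynomial (List ℕ) ℚ))^(i+1)) * z [2*x] := by
    rw [Finset.sum_mul, ← Finset.sum_sub_distrib, ← Finset.sum_sub_distrib]
    exact Finset.sum_congr rfl fun i _ => by ring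
  rw [hsplit, alt_sum_one x hx]
  ring

lemma span_aux (S : Set (MvPolynomial (List ℕ) ℚ)) :
    ∀ x : ℕ, 1 ≤ x → MultRels ⊆ S →
    (∑ i ∈ Finset.Icc 1 (2*x - 1),
        (-1 : MvPolynomial (List ℕ) ℚ) ^ (i + 1) *
          (z [2*x - i] * z [i] - z [2*x - i, i] - z [2*x])) ∈ Ideal.span S := by
  intro x hx hS
  refine Ideal.sum_mem _ fun i hi => Ideal.mul_mem_left _ _ ?_
  exact Ideal.subset_span (hS (mult_mem_aux x i hx hi))

/-- modulo the multiplication relations, the relations `EE` are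
equivalent to the relations `EI`: the two ideals coincide. -/
theorem EE_equiv_EI :
    Ideal.span (MultRels ∪ EERels) = Ideal.span (MultRels ∪ EIRels) := by
  apply le_antisymm <;> rw [Ideal.span_le] <;> refine Set.union_subset ?_ ?_
  · exact fun p hp => Ideal.subset_span (Or.inl hp)
  · rintro p ⟨x, hx, rfl⟩
    rw [key_identity x hx]
    exact Ideal.add_mem _ (Ideal.subset_span (Or.inr ⟨x, hx, rfl⟩))
      (span_aux _ x hx Set.subset_union_left)
  · exact fun p hp => Ideal.subset_span (Or.inl hp)
  · rintro p ⟨x, hx, rfl⟩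
    have h := key_identity x hx
    have h2 : 2 * z [2*x] - ∑ i ∈ Finset.Icc 1 (2*x - 1), (-1) ^ (i + 1) * z [2*x - i] * z [i]
        = (z [2*x] - ∑ i ∈ Finset.Icc 1 (2*x - 1), (-1) ^ (i + 1) * z [2*x - i, i])
          - ∑ i ∈ Finset.Icc 1 (2*x - 1),
              (-1 : MvPolynomial (List ℕ) ℚ) ^ (i + 1) *
                (z [2*x - i] * z [i] - z [2*x - i, i] - z [2*x]) := by
      rw [h]; ring
    rw [h2]
    exact Ideal.sub_mem _ (Ideal.subset_span (Or.inr ⟨x, hx, rfl⟩))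
      (span_aux _ x hx Set.subset_union_left)
end

section
/- In ℚ[z_α] modulo the multiplication relations z_α z_β = z_{α·β} + z_{α⊙β}, the set of relations T: z_x = z_{1^x} (x ones) for all x ≥ 1 is equivalent to the set of relations EI: 2z_{2x} = ∑_{i=1}^{2x-1} (-1)^{i+1} z_{2x-i} z_i for all x ≥ 1. -/
open MvPolynomial

noncomputable section AuxTEI

open Finset

def IM : Ideal (MvPolynomial (List ℕ) ℚ) := Ideal.span MultRels

abbrev QM := MvPolynomial (List ℕ) ℚ ⧸ IM

def zq (α : List ℕ) : QM := Ideal.Quotient.mk IM (z α)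

lemma compNcat_single (a b : ℕ) (bs : List ℕ) : compNcat [a] (b :: bs) = (a + b) :: bs := rfl

lemma isComp_single {k : ℕ} (hk : 1 ≤ k) : IsComposition [k] := by
  constructor
  · simp
  · intro a ha; simp at ha; omega

lemma isComp_rep {n : ℕ} (hn : 1 ≤ n) : IsComposition (List.replicate n 1) := by
  constructor
  · simp; omega
  · intro a ha; simp at ha; omega

lemma mul_rule {α β : List ℕ} (hα : IsComposition α) (hβ : IsComposition β) :
    zq α * zq β = zq (α ++ β) + zq (compNcat α β) := by
  have h : z α * z β - z (α ++ β) - z (compNcat α β) ∈ IM :=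
    Ideal.subset_span ⟨α, β, hα, hβ, rfl⟩
  have h0 : Ideal.Quotient.mk IM (z α * z β - z (α ++ β) - z (compNcat α β)) = 0 :=
    Ideal.Quotient.eq_zero_iff_mem.2 h
  simp only [map_sub, map_mul] at h0
  unfold zq
  linear_combination h0

lemma neg_one_pow_odd {m : ℕ} (h : Odd m) : (-1 : QM) ^ m = -1 := by
  obtain ⟨k, hk⟩ := h
  rw [hk, pow_add, pow_mul, pow_one]
  norm_num

lemma neg_one_pow_even {m : ℕ} (h : Even m) : (-1 : QM) ^ m = 1 := by
  obtain ⟨k, hk⟩ := h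
  rw [hk, ← two_mul, pow_mul]
  norm_num

/-- `Erep m` is `z_{1^m}`, with `Erep 0 = 1`. -/
def Erep : ℕ → QM := fun m => if m = 0 then 1 else zq (List.replicate m 1)

lemma tele (A : ℕ → QM) : ∀ n : ℕ, 1 ≤ n →
    ∑ k ∈ Icc 1 n, (-1 : QM) ^ (k + 1) * (A k + A (k + 1))
      = A 1 + (-1) ^ (n + 1) * A (n + 1) := by
  intro n
  induction n with
  | zero => omega
  | succ m ih =>
    intro _
    rcases Nat.eq_zero_or_pos m with h | h
    · subst h
      rw [Finset.Icc_self, Finset.sum_singleton]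
      ring
    · have hm : 1 ≤ m := by omega
      rw [Finset.sum_Icc_succ_top (by omega), ih hm]
      have h1 : ((-1 : QM)) ^ (m + 1 + 1) = -(-1) ^ (m + 1) := by ring
      rw [h1]
      ring

/-- Newton-style identity: `z_{1^n} = ∑_{k=1}^n (-1)^{k+1} z_k z_{1^{n-k}}`. -/
lemma newton (n : ℕ) (hn : 1 ≤ n) :
    zq (List.replicate n 1) = ∑ k ∈ Icc 1 n, (-1 : QM) ^ (k + 1) * (zq [k] * Erep (n - k)) := by
  set A : ℕ → QM := fun k => if k ≤ n then zq (k :: List.replicate (n - k) 1) else 0 with hA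
  have key : ∀ k ∈ Icc 1 n, (-1 : QM) ^ (k + 1) * (zq [k] * Erep (n - k))
      = (-1 : QM) ^ (k + 1) * (A k + A (k + 1)) := by
    intro k hk
    simp only [Finset.mem_Icc] at hk
    congr 1
    rcases Nat.eq_or_lt_of_le hk.2 with h | h
    · -- k = n
      have : A k = zq [k] := by
        simp [hA, hk.2, h, List.replicate]
      have h2 : A (k + 1) = 0 := by simp [hA, h]
      rw [this, h2, add_zero]
      have : Erep (n - k) = 1 := by simp [Erep, h]
      rw [this, mul_one]
    · -- k < n
      have hnk : 1 ≤ n - k := by omega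
      have hrep : List.replicate (n - k) 1 = 1 :: List.replicate (n - k - 1) 1 := by
        conv_lhs => rw [show n - k = (n - k - 1) + 1 by omega]
        rw [List.replicate_succ]
      have hE : Erep (n - k) = zq (List.replicate (n - k) 1) := by
        simp [Erep]; omega
      rw [hE, mul_rule (isComp_single hk.1) (isComp_rep hnk)]
      have h1 : A k = zq (k :: List.replicate (n - k) 1) := by simp [hA, hk.2]
      have h2 : A (k + 1) = zq ((k + 1) :: List.replicate (n - (k + 1)) 1) := by
        simp [hA, show k + 1 ≤ n by omega]
      have e1 : [k] ++ List.replicate (n - k) 1 = k :: List.replicate (n - k) 1 := by simp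
      have e2 : compNcat [k] (List.replicate (n - k) 1)
          = (k + 1) :: List.replicate (n - (k + 1)) 1 := by
        rw [hrep, compNcat_single, show n - (k + 1) = n - k - 1 from by omega]
      rw [h1, h2, e1, e2]
  rw [Finset.sum_congr rfl key, tele A n hn]
  have hA1 : A 1 = zq (List.replicate n 1) := by
    have : (1 : ℕ) ≤ n := hn
    have hrep : (1 : ℕ) :: List.replicate (n - 1) 1 = List.replicate n 1 := by
      conv_rhs => rw [show n = (n - 1) + 1 by omega, List.replicate_succ]
    simp [hA, hn, hrep]
  have hA2 : A (n + 1) = 0 := by simp [hA]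
  rw [hA1, hA2, mul_zero, add_zero]

/-- `Tq n = z_n - z_{1^n}`. -/
def Tq (n : ℕ) : QM := zq [n] - zq (List.replicate n 1)

/-- `Dq n` is the degree-`n` EI combination (zero in odd degrees). -/
def Dq (n : ℕ) : QM :=
  (if Even n then 2 * zq [n] else 0) - ∑ i ∈ Icc 1 (n - 1), (-1) ^ (i + 1) * zq [n - i] * zq [i]

lemma star (n : ℕ) (hn : 1 ≤ n) :
    Dq n = Tq n - ∑ k ∈ Icc 1 (n - 1), (-1) ^ (k + 1) * zq [k] * Tq (n - k) := by
  have hsplit : zq (List.replicate n 1)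
      = (∑ k ∈ Icc 1 (n - 1), (-1 : QM) ^ (k + 1) * (zq [k] * zq (List.replicate (n - k) 1)))
        + (-1) ^ (n + 1) * zq [n] := by
    rw [newton n hn]
    have h1 : Icc 1 n = insert n (Icc 1 (n - 1)) := by
      ext a; simp [Finset.mem_Icc, Finset.mem_insert]; omega
    rw [h1, Finset.sum_insert (by simp [Finset.mem_Icc]; omega)]
    have h2 : Erep (n - n) = 1 := by simp [Erep]
    rw [h2, mul_one, add_comm]
    congr 1
    apply Finset.sum_congr rfl
    intro k hk
    simp only [Finset.mem_Icc] at hk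
    have : Erep (n - k) = zq (List.replicate (n - k) 1) := by
      simp [Erep]; omega
    rw [this]
  have hcomm : ∑ i ∈ Icc 1 (n - 1), (-1 : QM) ^ (i + 1) * zq [n - i] * zq [i]
      = ∑ i ∈ Icc 1 (n - 1), (-1 : QM) ^ (i + 1) * zq [i] * zq [n - i] := by
    apply Finset.sum_congr rfl; intro i _; ring
  simp only [Dq, Tq, hcomm]
  rw [hsplit]
  simp only [mul_sub, Finset.sum_sub_distrib]
  have hsgn : (if Even n then 2 * zq [n] else 0) = zq [n] - (-1 : QM) ^ (n + 1) * zq [n] := by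
    rcases Nat.even_or_odd n with h | h
    · rw [if_pos h]
      have hp : (-1 : QM) ^ (n + 1) = -1 := neg_one_pow_odd (Even.add_one h)
      rw [hp]; ring
    · rw [if_neg (by simpa using h)]
      have hp : (-1 : QM) ^ (n + 1) = 1 := neg_one_pow_even (Odd.add_one h)
      rw [hp]; ring
  rw [hsgn]
  simp only [mul_assoc]
  ring

lemma Dq_odd (n : ℕ) (hn : Odd n) : Dq n = 0 := by
  have h1 : ¬ Even n := by simpa using hn
  rw [Dq, if_neg h1, zero_sub, neg_eq_zero]
  apply Finset.sum_involution (fun i _ => n - i)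
  · intro i hi
    simp only [Finset.mem_Icc] at hi
    have hni : n - (n - i) = i := by omega
    rw [hni]
    have key : (-1 : QM) ^ (n - i + 1) = -(-1 : QM) ^ (i + 1) := by
      have h2 : (-1 : QM) ^ (n - i + 1) * (-1 : QM) ^ (i + 1) = -1 := by
        rw [← pow_add]
        have : n - i + 1 + (i + 1) = n + 2 := by omega
        rw [this, pow_add, neg_one_pow_odd hn]
        norm_num
      have h3 : (-1 : QM) ^ (i + 1) * (-1 : QM) ^ (i + 1) = 1 := by
        rw [← pow_add, ← two_mul, pow_mul]
        norm_num
      calc (-1 : QM) ^ (n - i + 1) = (-1 : QM) ^ (n - i + 1) * ((-1 : QM) ^ (i + 1) * (-1 : QM) ^ (i + 1)) := by rw [h3, mul_one]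
        _ = ((-1 : QM) ^ (n - i + 1) * (-1 : QM) ^ (i + 1)) * (-1 : QM) ^ (i + 1) := by ring
        _ = -(-1 : QM) ^ (i + 1) := by rw [h2]; ring
    rw [key]
    ring
  · intro i hi _
    simp only [Finset.mem_Icc] at hi
    intro h
    have : n = 2 * i := by omega
    rw [this] at hn
    exact (Nat.not_odd_iff_even.2 ⟨i, by ring⟩) hn
  · intro i hi
    simp only [Finset.mem_Icc] at hi
    simp only [Finset.mem_Icc]
    omega
  · intro i hi
    simp only [Finset.mem_Icc] at hi
    omega

lemma Dq_mem_T (x : ℕ) (hx : 1 ≤ x) :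
    Dq (2 * x) ∈ Ideal.span ((Ideal.Quotient.mk IM) '' TRels) := by
  have hn : 1 ≤ 2 * x := by omega
  rw [star _ hn]
  have hT : ∀ m : ℕ, 1 ≤ m → Tq m ∈ Ideal.span ((Ideal.Quotient.mk IM) '' TRels) := by
    intro m hm
    exact Ideal.subset_span ⟨z [m] - z (List.replicate m 1), ⟨m, hm, rfl⟩, by
      simp [Tq, zq, map_sub]⟩
  refine sub_mem (hT _ hn) (Ideal.sum_mem _ ?_)
  intro k hk
  simp only [Finset.mem_Icc] at hk
  exact Ideal.mul_mem_left _ _ (hT _ (by omega))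

lemma Tq_mem_EI (n : ℕ) (hn : 1 ≤ n) :
    Tq n ∈ Ideal.span ((Ideal.Quotient.mk IM) '' EIRels) := by
  induction n using Nat.strong_induction_on with
  | _ n ih =>
    have hstar := star n hn
    have hTn : Tq n = Dq n + ∑ k ∈ Icc 1 (n - 1), (-1) ^ (k + 1) * zq [k] * Tq (n - k) := by
      rw [hstar]; ring
    rw [hTn]
    refine add_mem ?_ (Ideal.sum_mem _ ?_)
    · rcases Nat.even_or_odd n with h | h
      · obtain ⟨x, hx⟩ := h
        have hx1 : 1 ≤ x := by omega
        have hDq : Dq n = Ideal.Quotient.mk IM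
            (2 * z [2 * x] - ∑ i ∈ Icc 1 (2 * x - 1), (-1) ^ (i + 1) * z [2 * x - i] * z [i]) := by
          have hnx : n = 2 * x := by omega
          simp [Dq, zq, hnx, map_sub, map_sum, map_mul, map_pow, map_ofNat, Nat.even_iff]
        rw [hDq]
        exact Ideal.subset_span ⟨_, ⟨x, hx1, rfl⟩, rfl⟩
      · rw [Dq_odd n h]; exact zero_mem _
    · intro k hk
      simp only [Finset.mem_Icc] at hk
      exact Ideal.mul_mem_left _ _ (ih (n - k) (by omega) (by omega))

lemma lift_mem (S : Set (MvPolynomial (List ℕ) ℚ)) (p : MvPolynomial (List ℕ) ℚ)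
    (h : Ideal.Quotient.mk IM p ∈ Ideal.span ((Ideal.Quotient.mk IM) '' S)) :
    p ∈ Ideal.span (MultRels ∪ S) := by
  rw [← Ideal.map_span] at h
  obtain ⟨q, hq, hqp⟩ := (Ideal.mem_map_iff_of_surjective _ Ideal.Quotient.mk_surjective).1 h
  have h1 : q - p ∈ IM := Ideal.Quotient.eq.1 hqp
  have h2 : q ∈ Ideal.span (MultRels ∪ S) :=
    Ideal.span_mono Set.subset_union_right hq
  have h3 : q - p ∈ Ideal.span (MultRels ∪ S) :=
    Ideal.span_mono Set.subset_union_left h1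
  have : p = q - (q - p) := by ring
  rw [this]
  exact sub_mem h2 h3

end AuxTEI

/-- modulo the multiplication relations, the relations `T` are
equivalent to the relations `EI`: the two ideals coincide. -/
theorem T_equiv_EI :
    Ideal.span (MultRels ∪ TRels) = Ideal.span (MultRels ∪ EIRels) := by
  apply le_antisymm <;> rw [Ideal.span_le] <;> rintro p (hp | hp)
  · exact Ideal.subset_span (Or.inl hp)
  · obtain ⟨x, hx, rfl⟩ := hp
    apply lift_mem
    have : (Ideal.Quotient.mk IM) (z [x] - z (List.replicate x 1)) = Tq x := by
      simp [Tq, zq, map_sub]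
    rw [this]
    exact Tq_mem_EI x hx
  · exact Ideal.subset_span (Or.inl hp)
  · obtain ⟨x, hx, rfl⟩ := hp
    apply lift_mem
    have : (Ideal.Quotient.mk IM) (2 * z [2*x] - ∑ i ∈ Finset.Icc 1 (2*x - 1), (-1) ^ (i + 1) * z [2*x - i] * z [i]) = Dq (2*x) := by
      simp [Dq, zq, map_sub, map_sum, map_mul, map_pow, map_ofNat, Nat.even_iff]
    rw [this]
    exact Dq_mem_T x hx
end

section
/- For skew diagrams D₁, …, D_k and operations ★₁, …, ★_{k-1} with each ★ᵢ ∈ {·, ⊙}, the skew Schur function satisfies the determinantal identity s_{D₁★₁D₂★₂⋯★_{k-1}D_k} = det M, where M is the k×k upper-triangular-plus-subdiagonal matrix with M_{i,j} = s_{Dᵢ ★̄ᵢ D_{i+1} ★̄_{i+1} ⋯ ★̄_{j-1} D_j} for i ≤ j (with M_{i,i} = s_{Dᵢ}), M_{i+1,i} = 1, and M_{i,j} = 0 for j < i-1; here ★̄ᵢ denotes the complementary operation (★̄ = ⊙ if ★ = ·, and ★̄ = · if ★ = ⊙). -/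
/-- Abstract operations on skew diagrams: concatenation `·`, near concatenation `⊙`,
transpose and antipodal rotation. -/
structure SkewOps (S : Type*) where
  cat : S → S → S
  ncat : S → S → S
  tr : S → S
  rot : S → S

/-- The geometric laws satisfied by these operations on skew diagrams. -/
structure SkewLaws {S : Type*} (A : SkewOps S) : Prop where
  cat_assoc : ∀ a b c, A.cat (A.cat a b) c = A.cat a (A.cat b c)
  ncat_assoc : ∀ a b c, A.ncat (A.ncat a b) c = A.ncat a (A.ncat b c)
  cat_ncat : ∀ a b c, A.ncat (A.cat a b) c = A.cat a (A.ncat b c)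
  ncat_cat : ∀ a b c, A.cat (A.ncat a b) c = A.ncat a (A.cat b c)
  tr_tr : ∀ a, A.tr (A.tr a) = a
  tr_cat : ∀ a b, A.tr (A.cat a b) = A.ncat (A.tr a) (A.tr b)
  tr_ncat : ∀ a b, A.tr (A.ncat a b) = A.cat (A.tr a) (A.tr b)
  rot_rot : ∀ a, A.rot (A.rot a) = a
  rot_cat : ∀ a b, A.rot (A.cat a b) = A.cat (A.rot b) (A.rot a)
  rot_ncat : ∀ a b, A.rot (A.ncat a b) = A.ncat (A.rot b) (A.rot a)
  rot_tr : ∀ a, A.rot (A.tr a) = A.tr (A.rot a)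

/-- The list of joining operations `★₁, …, ★_{k-1}` of the ribbon corresponding to the
composition `α` (`true` = near concatenation `⊙` (same row), `false` = concatenation `·`). -/
def starsOf : List ℕ → List Bool
  | [] => []
  | [a] => List.replicate (a - 1) true
  | a :: b :: t => List.replicate (a - 1) true ++ false :: starsOf (b :: t)

/-- Combine an initial diagram with a list of (operation, diagram) pairs. -/
def combineAux {S : Type*} (A : SkewOps S) : S → List (Bool × S) → S
  | acc, [] => acc
  | acc, (b, E) :: rest => combineAux A ((if b then A.ncat else A.cat) acc E) rest

/-- The alternating blocks `D, Dᵗ, D, Dᵗ, …` (n of them). -/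
def blocksOf {S : Type*} (A : SkewOps S) (D : S) (n : ℕ) : List S :=
  (List.range n).map (fun i => if i % 2 = 0 then D else A.tr D)

/-- Composition of transpositions `α • D = D ★₁ Dᵗ ★₂ D ★₃ Dᵗ ⋯`. -/
def bullet {S : Type*} (A : SkewOps S) (α : List ℕ) (D : S) : S :=
  combineAux A D (List.zip (starsOf α) ((blocksOf A D α.sum).drop 1))

/-- `chainAux A star D i n = Dᵢ ★ᵢ D_{i+1} ★_{i+1} ⋯ ★_{i+n-1} D_{i+n}`
(`true` = near concatenation `⊙`, `false` = concatenation `·`). -/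
def chainAux {S : Type*} (A : SkewOps S) (star : ℕ → Bool) (D : ℕ → S) : ℕ → ℕ → S
  | i, 0 => D i
  | i, n + 1 => (if star i then A.ncat else A.cat) (D i) (chainAux A star D (i + 1) n)

/-- `chain A star D i j = Dᵢ ★ᵢ ⋯ ★_{j-1} D_j`. -/
def chain {S : Type*} (A : SkewOps S) (star : ℕ → Bool) (D : ℕ → S) (i j : ℕ) : S :=
  chainAux A star D i (j - i)


section Helpers

variable {S : Type*} (A : SkewOps S)

private lemma op_assoc (hA : SkewLaws A) (b c : Bool) (x y z : S) :
    (if b then A.ncat else A.cat) ((if c then A.ncat else A.cat) x y) z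
      = (if c then A.ncat else A.cat) x ((if b then A.ncat else A.cat) y z) := by
  cases b <;> cases c <;>
    simp [hA.cat_assoc, hA.ncat_assoc, hA.cat_ncat, hA.ncat_cat]

private lemma chainAux_congr (st st' : ℕ → Bool) (D D' : ℕ → S) :
    ∀ n i, (∀ m, i ≤ m → m < i + n → st m = st' m) →
      (∀ m, i ≤ m → m ≤ i + n → D m = D' m) →
      chainAux A st D i n = chainAux A st' D' i n
  | 0, i, _, hd => by simp [chainAux, hd i le_rfl (by omega)]
  | n+1, i, hs, hd => by
    simp only [chainAux]
    rw [hs i le_rfl (by omega), hd i le_rfl (by omega),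
      chainAux_congr st st' D D' n (i+1) (fun m h1 h2 => hs m (by omega) (by omega))
        (fun m h1 h2 => hd m (by omega) (by omega))]

private lemma chainAux_snoc (hA : SkewLaws A) (st : ℕ → Bool) (D : ℕ → S) :
    ∀ n i, chainAux A st D i (n+1)
      = (if st (i+n) then A.ncat else A.cat) (chainAux A st D i n) (D (i+n+1))
  | 0, i => by simp [chainAux]
  | n+1, i => by
    have h := chainAux_snoc hA st D n (i+1)
    have h1 : i + 1 + n = i + (n + 1) := by omega
    rw [h1] at h
    calc chainAux A st D i (n+2)
        = (if st i then A.ncat else A.cat) (D i) (chainAux A st D (i+1) (n+1)) := rfl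
      _ = (if st i then A.ncat else A.cat) (D i)
            ((if st (i+(n+1)) then A.ncat else A.cat) (chainAux A st D (i+1) n)
              (D (i+(n+1)+1))) := by rw [h]
      _ = (if st (i+(n+1)) then A.ncat else A.cat)
            ((if st i then A.ncat else A.cat) (D i) (chainAux A st D (i+1) n))
            (D (i+(n+1)+1)) := (op_assoc A hA _ _ _ _ _).symm
      _ = _ := rfl

private lemma chainAux_merge (st : ℕ → Bool) (b : Bool) (D : ℕ → S) (j : ℕ) :
    ∀ n i, i + n = j →
      chainAux A st
          (fun m => if m = j then (if b then A.ncat else A.cat) (D j) (D (j+1)) else D m) i n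
        = chainAux A (fun m => if m = j then b else st m) D i (n+1)
  | 0, i, h => by
    subst h
    simp [chainAux]
  | n+1, i, h => by
    have hi : i ≠ j := by omega
    have ihm := chainAux_merge st b D j n (i+1) (by omega)
    show (if st i then A.ncat else A.cat)
        (if i = j then (if b then A.ncat else A.cat) (D j) (D (j+1)) else D i)
        (chainAux A st
          (fun m => if m = j then (if b then A.ncat else A.cat) (D j) (D (j+1)) else D m)
          (i+1) n)
      = (if (if i = j then b else st i) then A.ncat else A.cat) (D i)
        (chainAux A (fun m => if m = j then b else st m) D (i+1) (n+1))
    rw [if_neg hi, if_neg hi, ihm]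

end Helpers

/-- the Jacobi–Trudi style determinant formula
`s_{D₁★₁D₂★₂⋯★_{k-1}D_k} = det M`, where `M_{i,j} = s_{Dᵢ ★̄ᵢ ⋯ ★̄_{j-1} D_j}` for `i ≤ j`,
`M_{i+1,i} = 1` and `M_{i,j} = 0` for `j < i - 1`, with `★̄` the complementary operation. -/
theorem skew_schur_det {S R : Type*} [CommRing R] (A : SkewOps S) (hA : SkewLaws A)
    (s : S → R)
    (hmul : ∀ D E : S, s D * s E = s (A.cat D E) + s (A.ncat D E))
    (k : ℕ) (hk : 1 ≤ k) (D : ℕ → S) (star : ℕ → Bool) :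
    s (chain A star D 0 (k - 1)) =
      Matrix.det (Matrix.of fun i j : Fin k =>
        if (i : ℕ) ≤ (j : ℕ) then s (chain A (fun m => !(star m)) D i j)
        else if (i : ℕ) = (j : ℕ) + 1 then 1 else 0) := by
  obtain ⟨n, rfl⟩ : ∃ n, k = n + 1 := ⟨k - 1, by omega⟩
  clear hk
  induction n generalizing D star with
  | zero =>
    simp [Matrix.det_fin_one, chain, chainAux]
  | succ n ih =>
    set M : Matrix (Fin (n+2)) (Fin (n+2)) R := Matrix.of fun i j : Fin (n+2) =>
        if (i : ℕ) ≤ (j : ℕ) then s (chain A (fun m => !(star m)) D i j)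
        else if (i : ℕ) = (j : ℕ) + 1 then 1 else 0 with hM
    show s (chain A star D 0 (n+1)) = M.det
    rw [Matrix.det_succ_row M (Fin.last (n+1)), Fin.sum_univ_castSucc, Fin.sum_univ_castSucc]
    have hzero : ∀ c : Fin n,
        (-1 : R) ^ ((Fin.last (n+1) : ℕ) + ((c.castSucc.castSucc : Fin (n+2)) : ℕ)) *
          M (Fin.last (n+1)) c.castSucc.castSucc *
          (M.submatrix (Fin.last (n+1)).succAbove (c.castSucc.castSucc).succAbove).det = 0 := by
      intro c
      have hcn : (c : ℕ) < n := c.isLt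
      have h0 : M (Fin.last (n+1)) (c.castSucc.castSucc) = 0 := by
        have hv1 : ((Fin.last (n+1)) : ℕ) = n+1 := rfl
        have hv2 : ((c.castSucc.castSucc : Fin (n+2)) : ℕ) = (c : ℕ) := rfl
        simp only [hM, Matrix.of_apply, hv1, hv2]
        rw [if_neg (by omega), if_neg (by omega)]
      rw [h0, mul_zero, zero_mul]
    rw [Finset.sum_congr rfl (fun c _ => hzero c), Finset.sum_const_zero, zero_add]
    -- the two surviving terms
    have hlastval : M (Fin.last (n+1)) (Fin.last (n+1)) = s (D (n+1)) := by
      simp [hM, chain, chainAux]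
    have hsubval : M (Fin.last (n+1)) (Fin.last n).castSucc = 1 := by
      simp only [hM, Matrix.of_apply, Fin.val_last, Fin.coe_castSucc]
      rw [if_neg (by omega)]
      simp
    -- principal minor equals matrix of the IH
    have hminor1 : (M.submatrix (Fin.last (n+1)).succAbove
        (Fin.last (n+1)).succAbove).det = s (chain A star D 0 n) := by
      have ih' := ih D star
      simp only [Nat.add_sub_cancel] at ih'
      rw [ih']
      congr 1
      ext i j
      simp only [Matrix.submatrix_apply, Fin.succAbove_last, hM, Matrix.of_apply,
        Fin.coe_castSucc]
    -- the other minor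
    set E : ℕ → S := fun m =>
      if m = n then (if !(star n) then A.ncat else A.cat) (D n) (D (n+1)) else D m with hE
    set st2 : ℕ → Bool := fun m => if m = n then !(star m) else star m with hst2
    have hminor2 : (M.submatrix (Fin.last (n+1)).succAbove
        ((Fin.last n).castSucc : Fin (n+2)).succAbove).det
        = s (chainAux A st2 D 0 (n+1)) := by
      have hEmat : (M.submatrix (Fin.last (n+1)).succAbove
          ((Fin.last n).castSucc : Fin (n+2)).succAbove)
          = Matrix.of fun i j : Fin (n+1) =>
            if (i : ℕ) ≤ (j : ℕ) then s (chain A (fun m => !(st2 m)) E i j)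
            else if (i : ℕ) = (j : ℕ) + 1 then 1 else 0 := by
        ext i j
        have hrow : (((Fin.last (n+1)).succAbove i : Fin (n+2)) : ℕ) = (i : ℕ) := by
          simp [Fin.succAbove_last]
        rcases lt_or_ge (j : ℕ) n with h | h
        · have hcol : ((((Fin.last n).castSucc : Fin (n+2)).succAbove j : Fin (n+2)) : ℕ)
              = (j : ℕ) := by
            have hlt : (j.castSucc : Fin (n+2)) < (Fin.last n).castSucc := by
              simpa [Fin.lt_def] using h
            rw [Fin.succAbove_of_castSucc_lt _ _ hlt, Fin.coe_castSucc]
          simp only [Matrix.submatrix_apply, hM, Matrix.of_apply, hrow, hcol]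
          by_cases hij : (i : ℕ) ≤ (j : ℕ)
          · rw [if_pos hij, if_pos hij]
            congr 1
            unfold chain
            apply chainAux_congr
            · intro m h1 h2
              have : m ≠ n := by omega
              simp [hst2, this]
            · intro m h1 h2
              have : m ≠ n := by omega
              simp [hE, this]
          · rw [if_neg hij, if_neg hij]
        · have hj : (j : ℕ) = n := by omega
          have hcol : ((((Fin.last n).castSucc : Fin (n+2)).succAbove j : Fin (n+2)) : ℕ)
              = (j : ℕ) + 1 := by
            have hle : ((Fin.last n).castSucc : Fin (n+2)) ≤ j.castSucc := by
              simpa [Fin.le_def] using h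
            rw [Fin.succAbove_of_le_castSucc _ _ hle, Fin.val_succ]
          simp only [Matrix.submatrix_apply, hM, Matrix.of_apply, hrow, hcol]
          have hin : (i : ℕ) < n + 1 := i.isLt
          have hi : (i : ℕ) ≤ (j : ℕ) + 1 := by omega
          have hi' : (i : ℕ) ≤ (j : ℕ) := by omega
          rw [if_pos hi, if_pos hi']
          congr 1
          unfold chain
          have hmerge := chainAux_merge A (fun m => !(st2 m)) (!(star n)) D n
            ((j : ℕ) - (i : ℕ)) (i : ℕ) (by omega)
          have hop : (if st2 n then A.ncat else A.cat) = (if !(star n) then A.ncat else A.cat) := by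
            simp [hst2]
          have hE' : (fun m => if m = n then
              (if !(star n) then A.ncat else A.cat) (D n) (D (n+1)) else D m) = E := by
            funext m
            by_cases hmn : m = n <;> simp [hE, hmn]
          rw [hE'] at hmerge
          rw [hj] at hmerge ⊢
          rw [hmerge]
          have harith : n + 1 - (i : ℕ) = (n - (i : ℕ)) + 1 := by omega
          rw [harith]
          apply chainAux_congr
          · intro m h1 h2
            by_cases hmn : m = n <;> simp [hst2, hmn]
          · intro m _ _; rfl
      rw [hEmat, ← ih E st2]
      have : chain A st2 E 0 n = chainAux A st2 D 0 (n+1) := by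
        unfold chain
        rw [Nat.sub_zero]
        rcases Nat.eq_zero_or_pos n with hn | hn
        · subst hn
          show E 0 = (if st2 0 then A.ncat else A.cat) (D 0) (chainAux A st2 D 1 0)
          simp [hE, hst2, chainAux]
        · have hmerge := chainAux_merge A st2 (!(star n)) D n n 0 (by omega)
          have hE' : (fun m => if m = n then
              (if !(star n) then A.ncat else A.cat) (D n) (D (n+1)) else D m) = E := by
            funext m; simp [hE]
          rw [hE'] at hmerge
          rw [hmerge]
          apply chainAux_congr
          · intro m _ _
            by_cases hmn : m = n <;> simp [hst2, hmn]
          · intro m _ _; rfl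
      simp only [Nat.add_sub_cancel]
      rw [this]
    rw [hminor1, hminor2, hlastval, hsubval]
    have hsign1 : ((-1 : R)) ^ ((Fin.last (n+1) : ℕ) + (((Fin.last n).castSucc : Fin (n+2)) : ℕ))
        = -1 := by
      have : (Fin.last (n+1) : ℕ) + (((Fin.last n).castSucc : Fin (n+2)) : ℕ) = 2*n + 1 := by
        simp; omega
      rw [this]; simp [pow_succ, pow_mul]
    have hsign2 : ((-1 : R)) ^ ((Fin.last (n+1) : ℕ) + ((Fin.last (n+1) : Fin (n+2)) : ℕ))
        = 1 := by
      have : (Fin.last (n+1) : ℕ) + ((Fin.last (n+1) : Fin (n+2)) : ℕ) = 2*(n+1) := by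
        simp; omega
      rw [this]; simp [pow_mul]
    rw [hsign1, hsign2]
    -- final algebraic identity
    have hP : chainAux A st2 D 0 n = chainAux A star D 0 n := by
      apply chainAux_congr
      · intro m _ hm
        have : m ≠ n := by omega
        simp [hst2, this]
      · intro m _ _; rfl
    have hchain1 : chain A star D 0 (n+1)
        = (if star n then A.ncat else A.cat) (chainAux A star D 0 n) (D (n+1)) := by
      unfold chain
      rw [Nat.sub_zero, chainAux_snoc A hA star D n 0]
      norm_num
    have hchain2 : chainAux A st2 D 0 (n+1)
        = (if !(star n) then A.ncat else A.cat) (chainAux A star D 0 n) (D (n+1)) := by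
      rw [chainAux_snoc A hA st2 D n 0, hP]
      norm_num [hst2]
    have key := hmul (chainAux A star D 0 n) (D (n+1))
    have hchain0 : chain A star D 0 n = chainAux A star D 0 n := by
      unfold chain; rw [Nat.sub_zero]
    rw [hchain1, hchain2, hchain0]
    cases hsn : star n <;> simp only [hsn, Bool.not_true, Bool.not_false] <;>
      norm_num <;> linear_combination -key
end

section
/- If λ/μ has shifted skew diagram equal to a ribbon with n cells, then the coefficient of x₁ⁿ in Q_{λ/μ} is 2; if the shifted skew diagram is disconnected with c connected components each of which is a ribbon, the coefficient is 2^c; and if it contains a 2×2 block of cells, the coefficient is 0. -/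
/-- Translate a set of cells `(row, column)` by a vector `t`. -/
def cellsTranslate (D : Finset (ℤ × ℤ)) (t : ℤ × ℤ) : Finset (ℤ × ℤ) :=
  D.image (fun p => (p.1 + t.1, p.2 + t.2))

/-- The cells of the ribbon of the composition `α`: row `i` (top to bottom) has `αᵢ` cells,
and consecutive rows overlap in exactly one column. -/
def ribbonSet (α : List ℕ) : Finset (ℤ × ℤ) :=
  (Finset.range α.length).biUnion (fun i =>
    (Finset.range (α.getD i 0)).image (fun c : ℕ =>
      ((i : ℤ), (((α.drop (i + 1)).sum : ℤ) - ((α.length - 1 - i : ℕ) : ℤ) + (c : ℤ)))))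

/-- A set of cells is a ribbon if it is a translate of the diagram of some composition. -/
def IsRibbonDiagram (D : Finset (ℤ × ℤ)) : Prop :=
  ∃ (α : List ℕ) (t : ℤ × ℤ), IsComposition α ∧ D = cellsTranslate (ribbonSet α) t

/-- A filling of the cells of `D` by the letters `1' < 1` (`true` = `1`, `false` = `1'`)
which is a weakly amenable tableau: rows and columns weakly increase, at most one `1'`
per row, at most one `1` per column.  These fillings count the coefficient of `x₁ⁿ`. -/
def ValidFilling (D : Finset (ℤ × ℤ)) (g : {p // p ∈ D} → Bool) : Prop :=
  (∀ (r c : ℤ) (h1 : ((r, c) : ℤ × ℤ) ∈ D) (h2 : ((r, c + 1) : ℤ × ℤ) ∈ D),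
      g ⟨(r, c), h1⟩ = true → g ⟨(r, c + 1), h2⟩ = true) ∧
  (∀ (r c : ℤ) (h1 : ((r, c) : ℤ × ℤ) ∈ D) (h2 : ((r + 1, c) : ℤ × ℤ) ∈ D),
      g ⟨(r, c), h1⟩ = true → g ⟨(r + 1, c), h2⟩ = true) ∧
  (∀ r : ℤ, Nat.card {p : {p // p ∈ D} // p.val.1 = r ∧ g p = false} ≤ 1) ∧
  (∀ c : ℤ, Nat.card {p : {p // p ∈ D} // p.val.2 = c ∧ g p = true} ≤ 1)

lemma finCardLeOne {β : Type*} [Finite β] (h : ∀ a b : β, a = b) : Nat.card β ≤ 1 := by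
  have := Fintype.ofFinite β
  rw [Nat.card_eq_fintype_card]
  exact Fintype.card_le_one_iff.mpr h

lemma finCardContra {β : Type*} [Finite β] (a b : β) (hab : a ≠ b)
    (hle : Nat.card β ≤ 1) : False := by
  have := Fintype.ofFinite β
  rw [Nat.card_eq_fintype_card] at hle
  exact absurd (Fintype.one_lt_card_iff_nontrivial.mpr ⟨a, b, hab⟩) (by omega)

/-- The canonical filling of a ribbon. -/
def flAux (F : ℕ → ℤ) (r0 : ℤ) (L : ℕ) (b : Bool) (q : ℤ × ℤ) : Bool :=
  if q.2 = F (q.1 - r0).toNat then (if q.1 = r0 + ((L - 1 : ℕ) : ℤ) then b else false) else true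

lemma flAux_val (F : ℕ → ℤ) (r0 : ℤ) (L : ℕ) (b : Bool) (i : ℕ) (x : ℤ) :
    flAux F r0 L b (r0 + (i : ℤ), x) =
      if x = F i then (if i = L - 1 then b else false) else true := by
  simp only [flAux]
  rw [show ((r0 + (i : ℤ)) - r0).toNat = i from by omega]
  by_cases hx : x = F i
  · rw [if_pos hx, if_pos hx]
    by_cases h : i = L - 1
    · rw [if_pos (by omega), if_pos h]
    · rw [if_neg (by omega), if_neg h]
  · rw [if_neg hx, if_neg hx]

lemma ribbon_card_eq_two (L : ℕ) (hL : 0 < L) (F : ℕ → ℤ) (A : ℕ → ℕ)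
    (hA : ∀ i, i < L → 0 < A i)
    (hF : ∀ i, i + 1 < L → F i = F (i + 1) + (A (i + 1) : ℤ) - 1)
    (r0 : ℤ) (D : Finset (ℤ × ℤ))
    (hD : ∀ p : ℤ × ℤ, p ∈ D ↔
      ∃ i, i < L ∧ p.1 = r0 + (i : ℤ) ∧ F i ≤ p.2 ∧ p.2 < F i + (A i : ℤ)) :
    Nat.card {g : {p // p ∈ D} → Bool // ValidFilling D g} = 2 := by
  classical
  -- antitone
  have hstep : ∀ i, i + 1 < L → F (i + 1) ≤ F i := by
    intro i h
    have h1 := hF i h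
    have h2 := hA (i + 1) h
    omega
  have hanti : ∀ i k, i + k < L → F (i + k) ≤ F i := by
    intro i k
    induction k with
    | zero => intro _; exact le_refl _
    | succ n ih =>
      intro h
      exact le_trans (hstep (i + n) (by omega)) (ih (by omega))
  -- column structure
  have S1 : ∀ i j (x : ℤ), i < j → j < L → F i ≤ x → x < F i + (A i : ℤ) →
      F j ≤ x → x < F j + (A j : ℤ) → x = F i := by
    intro i j x hij hjL h1 h2 h3 h4
    have e : F (j - 1) = F j + (A j : ℤ) - 1 := by
      have := hF (j - 1) (by omega)
      rwa [show j - 1 + 1 = j from by omega] at this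
    have hle : F (j - 1) ≤ F i := by
      have h := hanti i (j - 1 - i) (by omega)
      rwa [show i + (j - 1 - i) = j - 1 from by omega] at h
    omega
  have S2 : ∀ i, i + 1 < L → ((r0 + ((i + 1 : ℕ) : ℤ), F i) : ℤ × ℤ) ∈ D := by
    intro i h
    refine (hD _).mpr ⟨i + 1, h, rfl, ?_, ?_⟩
    · have := hF i h; have := hA (i + 1) h; simp only; omega
    · have := hF i h; have := hA (i + 1) h; simp only; omega
  -- the bottom-left cell
  have hblD : ((r0 + ((L - 1 : ℕ) : ℤ), F (L - 1)) : ℤ × ℤ) ∈ D :=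
    (hD _).mpr ⟨L - 1, by omega, rfl, le_refl _, by have := hA (L - 1) (by omega); omega⟩
  -- cells where flAux is false have column F i
  have hfalse : ∀ (b : Bool) (pr pc : ℤ) (i : ℕ), i < L → pr = r0 + (i : ℤ) →
      flAux F r0 L b (pr, pc) = false → pc = F i := by
    intro b pr pc i hi hr hf
    by_contra hne
    rw [hr, flAux_val, if_neg hne] at hf
    cases hf
  -- validity of the canonical fillings
  have hvalid : ∀ b : Bool, ValidFilling D (fun p => flAux F r0 L b p.1) := by
    intro b
    refine ⟨?_, ?_, ?_, ?_⟩
    · -- rows weakly increase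
      intro r c h1 h2 _
      obtain ⟨i, hi, hr, hc1, hc2⟩ := (hD _).mp h1
      have hr' : r = r0 + (i : ℤ) := hr
      have hc1' : F i ≤ c := hc1
      show flAux F r0 L b (r, c + 1) = true
      rw [hr', flAux_val, if_neg (by omega)]
    · -- columns weakly increase (vacuous)
      intro r c h1 h2 ht
      exfalso
      obtain ⟨i, hi, hr, hc1, hc2⟩ := (hD _).mp h1
      obtain ⟨j, hj, hrj, hcj1, hcj2⟩ := (hD _).mp h2
      have hr' : r = r0 + (i : ℤ) := hr
      have hrj' : r + 1 = r0 + (j : ℤ) := hrj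
      have hij : i < j := by omega
      have hx : c = F i := S1 i j c hij hj hc1 hc2 hcj1 hcj2
      have ht' : flAux F r0 L b (r, c) = true := ht
      rw [hr', flAux_val, if_pos hx, if_neg (by omega)] at ht'
      cases ht'
    · -- at most one false per row
      intro r
      apply finCardLeOne
      rintro ⟨⟨⟨ar, ac⟩, ha⟩, har, haf⟩ ⟨⟨⟨br, bc⟩, hb⟩, hbr, hbf⟩
      obtain ⟨i, hi, hra, _, _⟩ := (hD _).mp ha
      obtain ⟨j, hj, hrb, _, _⟩ := (hD _).mp hb
      have hra' : ar = r0 + (i : ℤ) := hra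
      have hrb' : br = r0 + (j : ℤ) := hrb
      have har' : ar = r := har
      have hbr' : br = r := hbr
      have hij : i = j := by omega
      have h1 : ac = F i := hfalse b ar ac i hi hra' haf
      have h2 : bc = F j := hfalse b br bc j hj hrb' hbf
      apply Subtype.ext; apply Subtype.ext
      simp only [Prod.mk.injEq]
      constructor
      · omega
      · rw [h1, h2, hij]
    · -- at most one true per column
      intro x
      apply finCardLeOne
      have main : ∀ (i j : ℕ) (pr : ℤ), i < j → j < L → pr = r0 + (i : ℤ) →
          F i ≤ x → x < F i + (A i : ℤ) → F j ≤ x → x < F j + (A j : ℤ) →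
          flAux F r0 L b (pr, x) = true → False := by
        intro i j pr hij hjL hr h1 h2 h3 h4 ht
        have hx : x = F i := S1 i j x hij hjL h1 h2 h3 h4
        rw [hr, flAux_val, if_pos hx, if_neg (by omega)] at ht
        cases ht
      rintro ⟨⟨⟨ar, ac⟩, ha⟩, hac, hat⟩ ⟨⟨⟨br, bc⟩, hb⟩, hbc, hbt⟩
      obtain ⟨i, hi, hra, h1, h2⟩ := (hD _).mp ha
      obtain ⟨j, hj, hrb, h3, h4⟩ := (hD _).mp hb
      have hra' : ar = r0 + (i : ℤ) := hra
      have hrb' : br = r0 + (j : ℤ) := hrb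
      have hac' : ac = x := hac
      have hbc' : bc = x := hbc
      have h1' : F i ≤ ac := h1
      have h2' : ac < F i + (A i : ℤ) := h2
      have h3' : F j ≤ bc := h3
      have h4' : bc < F j + (A j : ℤ) := h4
      have hat' : flAux F r0 L b (ar, ac) = true := hat
      have hbt' : flAux F r0 L b (br, bc) = true := hbt
      rcases lt_trichotomy i j with h | h | h
      · exact absurd (main i j ar h hj hra' (by omega) (by omega) (by omega) (by omega)
          (by rwa [hac'] at hat')) id
      · apply Subtype.ext; apply Subtype.ext
        simp only [Prod.mk.injEq]
        exact ⟨by omega, by omega⟩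
      · exact absurd (main j i br h hi hrb' (by omega) (by omega) (by omega) (by omega)
          (by rwa [hbc'] at hbt')) id
  -- uniqueness
  have huniq : ∀ (g : {p // p ∈ D} → Bool), ValidFilling D g → ∀ (p : {p // p ∈ D}),
      g p = flAux F r0 L (g ⟨_, hblD⟩) p.1 := by
    rintro g ⟨hrow, hcol, hrf, hct⟩ ⟨⟨pr, pc⟩, hp⟩
    obtain ⟨i, hi, hr, h1, h2⟩ := (hD _).mp hp
    have hr' : pr = r0 + (i : ℤ) := hr
    have h1' : F i ≤ pc := h1
    have h2' : pc < F i + (A i : ℤ) := h2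
    set b := g ⟨_, hblD⟩ with hbdef
    rcases eq_or_ne pc (F i) with he | hne
    · rcases eq_or_ne i (L - 1) with hiL | hiL
      · -- this is the bottom-left cell
        have hcell : ((pr, pc) : ℤ × ℤ) = (r0 + ((L - 1 : ℕ) : ℤ), F (L - 1)) := by
          rw [hr', he, hiL]
        have hgp : g ⟨(pr, pc), hp⟩ = b := by
          rw [hbdef]; congr 1; exact Subtype.ext hcell
        show g ⟨(pr, pc), hp⟩ = flAux F r0 L b (pr, pc)
        rw [hgp, hr', he, hiL, flAux_val, if_pos rfl, if_pos rfl]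
      · -- forced to be false
        have hi1 : i + 1 < L := by omega
        have hbelow : ((pr + 1, pc) : ℤ × ℤ) ∈ D := by
          have := S2 i hi1
          rwa [show r0 + ((i + 1 : ℕ) : ℤ) = pr + 1 from by omega,
               show F i = pc from he.symm] at this
        have hgf : g ⟨(pr, pc), hp⟩ = false := by
          by_contra hgt
          have hgp : g ⟨(pr, pc), hp⟩ = true := by
            cases hval : g ⟨(pr, pc), hp⟩
            · exact absurd hval hgt
            · rfl
          have hgb : g ⟨(pr + 1, pc), hbelow⟩ = true := hcol pr pc hp hbelow hgp
          exact finCardContra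
            (β := {p : {p // p ∈ D} // p.val.2 = pc ∧ g p = true})
            ⟨⟨(pr, pc), hp⟩, rfl, hgp⟩ ⟨⟨(pr + 1, pc), hbelow⟩, rfl, hgb⟩
            (by intro hcon
                have := congrArg (fun z => z.val.val.1) hcon
                simp only at this
                omega)
            (hct pc)
        show g ⟨(pr, pc), hp⟩ = flAux F r0 L b (pr, pc)
        rw [hgf, hr', he, flAux_val, if_pos rfl, if_neg hiL]
    · -- forced to be true
      have hx : F i < pc := lt_of_le_of_ne h1' (Ne.symm hne)
      have hleft : ((pr, pc - 1) : ℤ × ℤ) ∈ D :=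
        (hD _).mpr ⟨i, hi, hr', by simp only; omega, by simp only; omega⟩
      have hgp : g ⟨(pr, pc), hp⟩ = true := by
        by_contra hgt
        have hgf : g ⟨(pr, pc), hp⟩ = false := by
          cases hval : g ⟨(pr, pc), hp⟩
          · rfl
          · exact absurd hval hgt
        have hgl : g ⟨(pr, pc - 1), hleft⟩ = false := by
          by_contra hgt2
          have hgl' : g ⟨(pr, pc - 1), hleft⟩ = true := by
            cases hval : g ⟨(pr, pc - 1), hleft⟩
            · exact absurd hval hgt2
            · rfl
          have hp' : ((pr, (pc - 1) + 1) : ℤ × ℤ) ∈ D := by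
            rwa [show pc - 1 + 1 = pc from by ring]
          have ht := hrow pr (pc - 1) hleft hp' hgl'
          have hceq : (⟨(pr, (pc - 1) + 1), hp'⟩ : {p // p ∈ D}) = ⟨(pr, pc), hp⟩ :=
            Subtype.ext (Prod.ext_iff.mpr ⟨rfl, by ring⟩)
          rw [hceq] at ht
          rw [ht] at hgf
          cases hgf
        exact finCardContra
          (β := {p : {p // p ∈ D} // p.val.1 = pr ∧ g p = false})
          ⟨⟨(pr, pc), hp⟩, rfl, hgf⟩ ⟨⟨(pr, pc - 1), hleft⟩, rfl, hgl⟩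
          (by intro hcon
              have := congrArg (fun z => z.val.val.2) hcon
              simp only at this
              omega)
          (hrf pr)
      show g ⟨(pr, pc), hp⟩ = flAux F r0 L b (pr, pc)
      rw [hgp, hr', flAux_val, if_neg hne]
  -- the equivalence with Bool
  have E : {g : {p // p ∈ D} → Bool // ValidFilling D g} ≃ Bool :=
    { toFun := fun g => g.1 ⟨_, hblD⟩
      invFun := fun b => ⟨fun p => flAux F r0 L b p.1, hvalid b⟩
      left_inv := by
        intro g
        apply Subtype.ext
        funext p
        exact (huniq g.1 g.2 p).symm
      right_inv := by
        intro b
        show flAux F r0 L b (r0 + ((L - 1 : ℕ) : ℤ), F (L - 1)) = b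
        rw [flAux_val, if_pos rfl, if_pos rfl] }
  rw [Nat.card_congr E]
  simp [Nat.card_eq_fintype_card]

lemma ribbon_filling_card {D : Finset (ℤ × ℤ)} (h : IsRibbonDiagram D) :
    Nat.card {g : {p // p ∈ D} → Bool // ValidFilling D g} = 2 := by
  obtain ⟨α, t, ⟨hne, hpos⟩, rfl⟩ := h
  have hL : 0 < α.length := List.length_pos_iff.mpr hne
  refine ribbon_card_eq_two α.length hL
    (fun i => ((α.drop (i + 1)).sum : ℤ) - ((α.length - 1 - i : ℕ) : ℤ) + t.2)
    (fun i => α.getD i 0) ?_ ?_ t.1 _ ?_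
  · intro i hi
    rw [List.getD_eq_getElem α 0 hi]
    exact hpos _ (List.getElem_mem hi)
  · intro i hi
    rw [List.getD_eq_getElem α 0 hi]
    rw [List.drop_eq_getElem_cons hi, List.sum_cons]
    push_cast
    omega
  · intro p
    simp only [cellsTranslate, ribbonSet, Finset.mem_image, Finset.mem_biUnion,
      Finset.mem_range]
    constructor
    · rintro ⟨q, ⟨i, hi, c, hc, rfl⟩, rfl⟩
      refine ⟨i, hi, by ring, by simp only; omega, by simp only; omega⟩
    · rintro ⟨i, hi, h1, h2, h3⟩
      obtain ⟨p1, p2⟩ := p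
      dsimp only at h1 h2 h3
      refine ⟨((i : ℤ), p2 - t.2), ⟨i, hi, (p2 - t.2 -
        (((α.drop (i + 1)).sum : ℤ) - ((α.length - 1 - i : ℕ) : ℤ))).toNat, by omega, ?_⟩, ?_⟩
      · refine Prod.ext_iff.mpr ⟨rfl, ?_⟩
        dsimp only
        omega
      · refine Prod.ext_iff.mpr ⟨?_, ?_⟩ <;> dsimp only
        · omega
        · ring

lemma no_filling_2x2 {D : Finset (ℤ × ℤ)} {r c : ℤ}
    (hA : ((r, c) : ℤ × ℤ) ∈ D) (hB : ((r, c + 1) : ℤ × ℤ) ∈ D)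
    (hC : ((r + 1, c) : ℤ × ℤ) ∈ D) (hDd : ((r + 1, c + 1) : ℤ × ℤ) ∈ D)
    (g : {p // p ∈ D} → Bool) (hg : ValidFilling D g) : False := by
  obtain ⟨hrow, hcol, hrf, hct⟩ := hg
  by_cases hA' : g ⟨(r, c), hA⟩ = true
  · have hC' : g ⟨(r + 1, c), hC⟩ = true := hcol r c hA hC hA'
    exact finCardContra (β := {p : {p // p ∈ D} // p.val.2 = c ∧ g p = true})
      ⟨⟨(r, c), hA⟩, rfl, hA'⟩ ⟨⟨(r + 1, c), hC⟩, rfl, hC'⟩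
      (by intro hcon
          have := congrArg (fun z => z.val.val.1) hcon
          simp only at this
          omega)
      (hct c)
  · have hAf : g ⟨(r, c), hA⟩ = false := by
      cases hval : g ⟨(r, c), hA⟩
      · rfl
      · exact absurd hval hA'
    have hB' : g ⟨(r, c + 1), hB⟩ = true := by
      by_contra hB'
      have hBf : g ⟨(r, c + 1), hB⟩ = false := by
        cases hval : g ⟨(r, c + 1), hB⟩
        · rfl
        · exact absurd hval hB'
      exact finCardContra (β := {p : {p // p ∈ D} // p.val.1 = r ∧ g p = false})
        ⟨⟨(r, c), hA⟩, rfl, hAf⟩ ⟨⟨(r, c + 1), hB⟩, rfl, hBf⟩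
        (by intro hcon
            have := congrArg (fun z => z.val.val.2) hcon
            simp only at this
            omega)
        (hrf r)
    have hD' : g ⟨(r + 1, c + 1), hDd⟩ = true := hcol r (c + 1) hB hDd hB'
    exact finCardContra (β := {p : {p // p ∈ D} // p.val.2 = c + 1 ∧ g p = true})
      ⟨⟨(r, c + 1), hB⟩, rfl, hB'⟩ ⟨⟨(r + 1, c + 1), hDd⟩, rfl, hD'⟩
      (by intro hcon
          have := congrArg (fun z => z.val.val.1) hcon
          simp only at this
          omega)
      (hct (c + 1))

lemma union_filling_card {D : Finset (ℤ × ℤ)} {c : ℕ} (parts : Fin c → Finset (ℤ × ℤ))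
    (hparts : ∀ i, IsRibbonDiagram (parts i))
    (hdisj : ∀ i j, i ≠ j → ∀ p ∈ parts i, ∀ q ∈ parts j, p.1 ≠ q.1 ∧ p.2 ≠ q.2)
    (hDu : D = Finset.univ.biUnion parts) :
    Nat.card {g : {p // p ∈ D} → Bool // ValidFilling D g} = 2 ^ c := by
  classical
  have hsub : ∀ (i : Fin c), ∀ p ∈ parts i, p ∈ D := by
    intro i p hp
    rw [hDu]
    exact Finset.mem_biUnion.mpr ⟨i, Finset.mem_univ i, hp⟩
  have hex : ∀ p, p ∈ D → ∃ i, p ∈ parts i := by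
    intro p hp
    rw [hDu] at hp
    obtain ⟨i, _, h⟩ := Finset.mem_biUnion.mp hp
    exact ⟨i, h⟩
  have hrowpart : ∀ (p q : ℤ × ℤ) (i j : Fin c), p ∈ parts i → q ∈ parts j →
      p.1 = q.1 → i = j := by
    intro p q i j hi hj hpq
    by_contra hne
    exact (hdisj i j hne p hi q hj).1 hpq
  have hcolpart : ∀ (p q : ℤ × ℤ) (i j : Fin c), p ∈ parts i → q ∈ parts j →
      p.2 = q.2 → i = j := by
    intro p q i j hi hj hpq
    by_contra hne
    exact (hdisj i j hne p hi q hj).2 hpq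
  choose idx hidx using hex
  set glue : (∀ i, {g : {p // p ∈ parts i} → Bool // ValidFilling (parts i) g}) →
      ({p // p ∈ D} → Bool) := fun gs p => (gs (idx p.1 p.2)).1 ⟨p.1, hidx p.1 p.2⟩ with hgluedef
  have glue_eq : ∀ gs (p : ℤ × ℤ) (hp : p ∈ D) (i : Fin c) (hpi : p ∈ parts i),
      glue gs ⟨p, hp⟩ = (gs i).1 ⟨p, hpi⟩ := by
    intro gs p hp i hpi
    have h : idx p hp = i := by
      by_contra hne
      exact (hdisj _ i hne p (hidx p hp) p hpi).1 rfl
    subst h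
    rfl
  have hglue_valid : ∀ gs, ValidFilling D (glue gs) := by
    intro gs
    refine ⟨?_, ?_, ?_, ?_⟩
    · intro r x h1 h2 ht
      have hi1 : ((r, x) : ℤ × ℤ) ∈ parts (idx (r, x) h1) := hidx _ _
      have hj : ((r, x + 1) : ℤ × ℤ) ∈ parts (idx (r, x + 1) h2) := hidx _ _
      have hij : idx (r, x) h1 = idx (r, x + 1) h2 := hrowpart _ _ _ _ hi1 hj rfl
      have hi2 : ((r, x + 1) : ℤ × ℤ) ∈ parts (idx (r, x) h1) := by rw [hij]; exact hj
      rw [glue_eq gs (r, x) h1 _ hi1] at ht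
      rw [glue_eq gs (r, x + 1) h2 _ hi2]
      exact (gs _).2.1 r x hi1 hi2 ht
    · intro r x h1 h2 ht
      have hi1 : ((r, x) : ℤ × ℤ) ∈ parts (idx (r, x) h1) := hidx _ _
      have hj : ((r + 1, x) : ℤ × ℤ) ∈ parts (idx (r + 1, x) h2) := hidx _ _
      have hij : idx (r, x) h1 = idx (r + 1, x) h2 := hcolpart _ _ _ _ hi1 hj rfl
      have hi2 : ((r + 1, x) : ℤ × ℤ) ∈ parts (idx (r, x) h1) := by rw [hij]; exact hj
      rw [glue_eq gs (r, x) h1 _ hi1] at ht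
      rw [glue_eq gs (r + 1, x) h2 _ hi2]
      exact (gs _).2.2.1 r x hi1 hi2 ht
    · intro r
      rcases isEmpty_or_nonempty {p : {p // p ∈ D} // p.val.1 = r ∧ glue gs p = false} with he | hne
      · simp [Nat.card_of_isEmpty]
      · obtain ⟨⟨p0, hp0r, hp0f⟩⟩ := hne
        set i0 := idx p0.1 p0.2 with hi0
        have hmem : ∀ (q : {p // p ∈ D}), q.val.1 = r → q.val ∈ parts i0 := by
          intro q hq
          have h := hidx q.1 q.2
          have heq : idx q.1 q.2 = i0 := by
            apply hrowpart _ _ _ _ h (hidx p0.1 p0.2)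
            rw [hq, hp0r]
          rwa [heq] at h
        have hinj : Function.Injective
            (fun (q : {p : {p // p ∈ D} // p.val.1 = r ∧ glue gs p = false}) =>
              (⟨⟨q.1.1, hmem q.1 q.2.1⟩, q.2.1, by
                  rw [← glue_eq gs q.1.1 q.1.2 i0 (hmem q.1 q.2.1)]
                  exact q.2.2⟩ :
                {p : {p // p ∈ parts i0} // p.val.1 = r ∧ (gs i0).1 p = false})) := by
          intro a b hab
          have := congrArg (fun z => z.val.val) hab
          simp only at this
          exact Subtype.ext (Subtype.ext this)
        exact le_trans (Nat.card_le_card_of_injective _ hinj) ((gs i0).2.2.2.1 r)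
    · intro x
      rcases isEmpty_or_nonempty {p : {p // p ∈ D} // p.val.2 = x ∧ glue gs p = true} with he | hne
      · simp [Nat.card_of_isEmpty]
      · obtain ⟨⟨p0, hp0c, hp0t⟩⟩ := hne
        set i0 := idx p0.1 p0.2 with hi0
        have hmem : ∀ (q : {p // p ∈ D}), q.val.2 = x → q.val ∈ parts i0 := by
          intro q hq
          have h := hidx q.1 q.2
          have heq : idx q.1 q.2 = i0 := by
            apply hcolpart _ _ _ _ h (hidx p0.1 p0.2)
            rw [hq, hp0c]
          rwa [heq] at h
        have hinj : Function.Injective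
            (fun (q : {p : {p // p ∈ D} // p.val.2 = x ∧ glue gs p = true}) =>
              (⟨⟨q.1.1, hmem q.1 q.2.1⟩, q.2.1, by
                  rw [← glue_eq gs q.1.1 q.1.2 i0 (hmem q.1 q.2.1)]
                  exact q.2.2⟩ :
                {p : {p // p ∈ parts i0} // p.val.2 = x ∧ (gs i0).1 p = true})) := by
          intro a b hab
          have := congrArg (fun z => z.val.val) hab
          simp only at this
          exact Subtype.ext (Subtype.ext this)
        exact le_trans (Nat.card_le_card_of_injective _ hinj) ((gs i0).2.2.2.2 x)
  have hres_valid : ∀ (g : {p // p ∈ D} → Bool), ValidFilling D g → ∀ (i : Fin c),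
      ValidFilling (parts i) (fun q => g ⟨q.1, hsub i q.1 q.2⟩) := by
    intro g hg i
    refine ⟨?_, ?_, ?_, ?_⟩
    · intro r x h1 h2 ht
      exact hg.1 r x (hsub i _ h1) (hsub i _ h2) ht
    · intro r x h1 h2 ht
      exact hg.2.1 r x (hsub i _ h1) (hsub i _ h2) ht
    · intro r
      have hinj : Function.Injective
          (fun (q : {p : {p // p ∈ parts i} // p.val.1 = r ∧
              (fun q => g ⟨q.1, hsub i q.1 q.2⟩) p = false}) =>
            (⟨⟨q.1.1, hsub i q.1.1 q.1.2⟩, q.2.1, q.2.2⟩ :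
              {p : {p // p ∈ D} // p.val.1 = r ∧ g p = false})) := by
        intro a b hab
        have := congrArg (fun z => z.val.val) hab
        simp only at this
        exact Subtype.ext (Subtype.ext this)
      exact le_trans (Nat.card_le_card_of_injective _ hinj) (hg.2.2.1 r)
    · intro x
      have hinj : Function.Injective
          (fun (q : {p : {p // p ∈ parts i} // p.val.2 = x ∧
              (fun q => g ⟨q.1, hsub i q.1 q.2⟩) p = true}) =>
            (⟨⟨q.1.1, hsub i q.1.1 q.1.2⟩, q.2.1, q.2.2⟩ :
              {p : {p // p ∈ D} // p.val.2 = x ∧ g p = true})) := by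
        intro a b hab
        have := congrArg (fun z => z.val.val) hab
        simp only at this
        exact Subtype.ext (Subtype.ext this)
      exact le_trans (Nat.card_le_card_of_injective _ hinj) (hg.2.2.2 x)
  have E : {g : {p // p ∈ D} → Bool // ValidFilling D g} ≃
      (∀ i, {g : {p // p ∈ parts i} → Bool // ValidFilling (parts i) g}) :=
    { toFun := fun g i => ⟨fun q => g.1 ⟨q.1, hsub i q.1 q.2⟩, hres_valid g.1 g.2 i⟩
      invFun := fun gs => ⟨glue gs, hglue_valid gs⟩
      left_inv := by
        intro g
        apply Subtype.ext
        funext p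
        rfl
      right_inv := by
        intro gs
        funext i
        apply Subtype.ext
        funext q
        show glue gs ⟨q.1, hsub i q.1 q.2⟩ = (gs i).1 q
        rw [glue_eq gs q.1 (hsub i q.1 q.2) i q.2] }
  rw [Nat.card_congr E, Nat.card_pi]
  have heach : ∀ i, Nat.card {g : {p // p ∈ parts i} → Bool // ValidFilling (parts i) g} = 2 :=
    fun i => ribbon_filling_card (hparts i)
  rw [Finset.prod_congr rfl (fun i _ => heach i), Finset.prod_const]
  simp

/-- the coefficient of `x₁ⁿ` in `Q_{λ/μ}` — i.e. the number of weakly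
amenable fillings by `1, 1'` — is `2` if the shifted diagram is a ribbon, `2^c` if it is
a disjoint union (no shared rows or columns) of `c` ribbons, and `0` if it contains a
`2 × 2` block of cells. -/
theorem coeff_x1_pow :
    (∀ (D : Finset (ℤ × ℤ)) (n : ℕ), IsRibbonDiagram D → D.card = n →
      Nat.card {g : {p // p ∈ D} → Bool // ValidFilling D g} = 2) ∧
    (∀ (D : Finset (ℤ × ℤ)) (c : ℕ) (parts : Fin c → Finset (ℤ × ℤ)), 1 ≤ c →
      (∀ i, IsRibbonDiagram (parts i)) →
      (∀ i j, i ≠ j → ∀ p ∈ parts i, ∀ q ∈ parts j, p.1 ≠ q.1 ∧ p.2 ≠ q.2) →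
      D = Finset.univ.biUnion parts →
      Nat.card {g : {p // p ∈ D} → Bool // ValidFilling D g} = 2 ^ c) ∧
    (∀ D : Finset (ℤ × ℤ),
      (∃ r c : ℤ, (r, c) ∈ D ∧ (r, c + 1) ∈ D ∧ (r + 1, c) ∈ D ∧ (r + 1, c + 1) ∈ D) →
      Nat.card {g : {p // p ∈ D} → Bool // ValidFilling D g} = 0) := by
  refine ⟨?_, ?_, ?_⟩
  · intro D n h _
    exact ribbon_filling_card h
  · intro D c parts _ hparts hdisj hDu
    exact union_filling_card parts hparts hdisj hDu
  · rintro D ⟨r, c, hA, hB, hC, hDd⟩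
    have : IsEmpty {g : {p // p ∈ D} → Bool // ValidFilling D g} :=
      ⟨fun g => no_filling_2x2 hA hB hC hDd g.1 g.2⟩
    exact Nat.card_of_isEmpty
end

section
/- If a skew Schur Q-function Q_D (indexed by a skew shape D = λ/μ with λ, μ strict partitions) equals a ribbon Schur Q-function 𝔯_α for some composition α, then the shifted diagram of D is a ribbon (connected with no 2×2 subdiagram). -/
/-- A strict partition: a strictly decreasing list of positive integers (possibly empty). -/
def IsStrictPartition (l : List ℕ) : Prop := l.Chain' (· > ·) ∧ ∀ a ∈ l, 0 < a

/-- The shifted skew diagram of `λ/μ`: row `i` occupies columns `[i + μᵢ, i + λᵢ)`. -/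
def shiftedDiagram (lam mu : List ℕ) : Finset (ℤ × ℤ) :=
  (Finset.range lam.length).biUnion (fun i =>
    (Finset.Ico (i + mu.getD i 0) (i + lam.getD i 0)).image (fun j : ℕ => ((i : ℤ), (j : ℤ))))

/-- A weakly amenable tableau on the cell set `D`, with entries in the alphabet
`1' < 1 < 2' < 2 < ⋯` encoded by positive naturals: `2i - 1 ↔ i'` and `2i ↔ i`.
Rows and columns weakly increase, each row has at most one `i'` for each `i`,
each column has at most one `i` for each `i`. -/
def IsWAT (D : Finset (ℤ × ℤ)) (T : {p // p ∈ D} → ℕ) : Prop :=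
  (∀ p, 1 ≤ T p) ∧
  (∀ (r c : ℤ) (h1 : ((r, c) : ℤ × ℤ) ∈ D) (h2 : ((r, c + 1) : ℤ × ℤ) ∈ D),
      T ⟨(r, c), h1⟩ ≤ T ⟨(r, c + 1), h2⟩) ∧
  (∀ (r c : ℤ) (h1 : ((r, c) : ℤ × ℤ) ∈ D) (h2 : ((r + 1, c) : ℤ × ℤ) ∈ D),
      T ⟨(r, c), h1⟩ ≤ T ⟨(r + 1, c), h2⟩) ∧
  (∀ (r : ℤ) (i : ℕ), Nat.card {p : {p // p ∈ D} // p.val.1 = r ∧ T p = 2 * i + 1} ≤ 1) ∧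
  (∀ (c : ℤ) (i : ℕ), Nat.card {p : {p // p ∈ D} // p.val.2 = c ∧ T p = 2 * i + 2} ≤ 1)

/-- The coefficient of the monomial `∏ xᵢ^{m i}` in `Q_D`: the number of weakly amenable
tableaux of shape `D` whose content is `m` (the entry `k` has value `(k+1)/2`). -/
noncomputable def QCoeff (D : Finset (ℤ × ℤ)) (m : ℕ → ℕ) : ℕ :=
  Nat.card {T : {p // p ∈ D} → ℕ // IsWAT D T ∧
    ∀ i : ℕ, 1 ≤ i → Nat.card {p : {p // p ∈ D} // (T p + 1) / 2 = i} = m i}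
namespace R17

/-- starting column of row `i` of the ribbon of `α` -/
def rstart (α : List ℕ) (i : ℕ) : ℤ :=
  ((α.drop (i + 1)).sum : ℤ) - ((α.length - 1 - i : ℕ) : ℤ)

lemma mem_shifted {lam mu : List ℕ} {r c : ℤ} :
    ((r, c) : ℤ × ℤ) ∈ shiftedDiagram lam mu ↔
    ∃ i : ℕ, i < lam.length ∧ r = (i : ℤ) ∧
      ((i : ℤ) + (mu.getD i 0 : ℤ)) ≤ c ∧ c < (i : ℤ) + (lam.getD i 0 : ℤ) := by
  simp only [shiftedDiagram, Finset.mem_biUnion, Finset.mem_range, Finset.mem_image,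
    Finset.mem_Ico, Prod.mk.injEq]
  constructor
  · rintro ⟨i, hi, j, ⟨hj1, hj2⟩, hr, hc⟩
    exact ⟨i, hi, hr.symm, by omega, by omega⟩
  · rintro ⟨i, hi, hr, hc1, hc2⟩
    refine ⟨i, hi, c.toNat, ⟨by omega, by omega⟩, hr.symm, by omega⟩

lemma mem_ribbon {α : List ℕ} {r c : ℤ} :
    ((r, c) : ℤ × ℤ) ∈ ribbonSet α ↔
    ∃ i : ℕ, i < α.length ∧ r = (i : ℤ) ∧
      rstart α i ≤ c ∧ c < rstart α i + (α.getD i 0 : ℤ) := by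
  simp only [ribbonSet, Finset.mem_biUnion, Finset.mem_range, Finset.mem_image, Prod.mk.injEq,
    rstart]
  constructor
  · rintro ⟨i, hi, j, hj, hr, hc⟩
    exact ⟨i, hi, hr.symm, by omega, by omega⟩
  · rintro ⟨i, hi, hr, hc1, hc2⟩
    refine ⟨i, hi, (c - rstart α i).toNat, by simp [rstart] at hc1 hc2 ⊢; omega, hr.symm, ?_⟩
    simp only [rstart] at hc1 hc2 ⊢
    omega

lemma rstart_succ {α : List ℕ} {i : ℕ} (hi : i + 1 < α.length) :
    rstart α (i + 1) + (α.getD (i + 1) 0 : ℤ) = rstart α i + 1 := by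
  have hdrop : α.drop (i + 1) = α.getD (i + 1) 0 :: α.drop (i + 1 + 1) := by
    rw [List.getD_eq_getElem _ _ hi]
    exact (List.drop_eq_getElem_cons hi).trans rfl
  have hnat : α.length - 1 - i = (α.length - 1 - (i + 1)) + 1 := by omega
  simp only [rstart, hdrop, List.sum_cons, hnat]
  push_cast
  ring

end R17
namespace R17

lemma card_le_one_of_sub {β : Type*} [Finite β] (h : ∀ x y : β, x = y) : Nat.card β ≤ 1 :=
  Finite.card_le_one_iff_subsingleton.mpr ⟨h⟩

lemma no_two {β : Type*} [Finite β] {x y : β} (hxy : x ≠ y) (hle : Nat.card β ≤ 1) : False := by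
  have : 1 < Nat.card β := Finite.one_lt_card_iff_nontrivial.mpr ⟨x, y, hxy⟩
  omega

section Generic

variable {D : Finset (ℤ × ℤ)} {T : {p // p ∈ D} → ℕ}

/-- In a `{1,2}`-valued WAT, the top of a vertical domino has entry `1` (i.e. `1'`). -/
lemma top_one (hT : IsWAT D T) (hval : ∀ p, T p = 1 ∨ T p = 2) {r c : ℤ}
    (h1 : ((r, c) : ℤ × ℤ) ∈ D) (h2 : ((r + 1, c) : ℤ × ℤ) ∈ D) : T ⟨(r, c), h1⟩ = 1 := by
  obtain ⟨_, _, hcol, _, hcolcard⟩ := hT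
  rcases hval ⟨(r, c), h1⟩ with h | h
  · exact h
  exfalso
  have h2v : T ⟨(r + 1, c), h2⟩ = 2 := by
    have := hcol r c h1 h2
    rcases hval ⟨(r + 1, c), h2⟩ with h' | h' <;> omega
  refine no_two (x := (⟨⟨(r, c), h1⟩, rfl, by omega⟩ :
      {p : {p // p ∈ D} // p.val.2 = c ∧ T p = 2 * 0 + 2}))
    (y := ⟨⟨(r + 1, c), h2⟩, rfl, by omega⟩) ?_ (hcolcard c 0)
  intro hcon
  have := congrArg (fun q => q.val.val.1) hcon
  simp at this

/-- In a `{1,2}`-valued WAT, a cell with entry `1'` and a cell to its left is impossible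
together with a cell directly left of a domino top. -/
lemma no_bad (hT : IsWAT D T) (hval : ∀ p, T p = 1 ∨ T p = 2) {r c : ℤ}
    (h0 : ((r, c - 1) : ℤ × ℤ) ∈ D) (h1 : ((r, c) : ℤ × ℤ) ∈ D)
    (h2 : ((r + 1, c) : ℤ × ℤ) ∈ D) : False := by
  have htop : T ⟨(r, c), h1⟩ = 1 := top_one hT hval h1 h2
  obtain ⟨hge, hrow, _, hrowcard, _⟩ := hT
  have h1' : ((r, (c - 1) + 1) : ℤ × ℤ) ∈ D := by rwa [sub_add_cancel]
  have heq : (⟨(r, (c - 1) + 1), h1'⟩ : {p // p ∈ D}) = ⟨(r, c), h1⟩ := by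
    simp [Subtype.ext_iff]
  have hle := hrow r (c - 1) h0 h1'
  rw [heq, htop] at hle
  have h0v : T ⟨(r, c - 1), h0⟩ = 1 := le_antisymm hle (hge _)
  refine no_two (x := (⟨⟨(r, c - 1), h0⟩, rfl, by omega⟩ :
      {p : {p // p ∈ D} // p.val.1 = r ∧ T p = 2 * 0 + 1}))
    (y := ⟨⟨(r, c), h1⟩, rfl, by omega⟩) ?_ (hrowcard r 0)
  intro hcon
  have := congrArg (fun q => q.val.val.2) hcon
  simp at this

/-- A cell directly left of a cell with entry `1'` is impossible (in a `{1,2}`-valued WAT). -/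
lemma no_left_of_one (hT : IsWAT D T) {r c : ℤ}
    (h0 : ((r, c) : ℤ × ℤ) ∈ D) (h1 : ((r, c + 1) : ℤ × ℤ) ∈ D)
    (hv : T ⟨(r, c + 1), h1⟩ = 1) : False := by
  obtain ⟨hge, hrow, _, hrowcard, _⟩ := hT
  have hle := hrow r c h0 h1
  rw [hv] at hle
  have h0v : T ⟨(r, c), h0⟩ = 1 := le_antisymm hle (hge _)
  refine no_two (x := (⟨⟨(r, c), h0⟩, rfl, by omega⟩ :
      {p : {p // p ∈ D} // p.val.1 = r ∧ T p = 2 * 0 + 1}))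
    (y := ⟨⟨(r, c + 1), h1⟩, rfl, by omega⟩) ?_ (hrowcard r 0)
  intro hcon
  have := congrArg (fun q => q.val.val.2) hcon
  simp at this

/-- Entries of a WAT whose content vanishes in degrees `≥ 2` lie in `{1, 2}`. -/
lemma values_12 {m : ℕ → ℕ} (hT : IsWAT D T)
    (hcont : ∀ i : ℕ, 1 ≤ i → Nat.card {p : {p // p ∈ D} // (T p + 1) / 2 = i} = m i)
    (hm : ∀ i, 2 ≤ i → m i = 0) : ∀ p, T p = 1 ∨ T p = 2 := by
  intro p
  by_contra hcon
  push_neg at hcon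
  have h3 : 3 ≤ T p := by have := hT.1 p; omega
  set i := (T p + 1) / 2 with hi
  have hi2 : 2 ≤ i := by omega
  have h0 : Nat.card {q : {p // p ∈ D} // (T q + 1) / 2 = i} = 0 := by
    rw [hcont i (by omega)]; exact hm i hi2
  rw [Nat.card_eq_zero] at h0
  rcases h0 with h0 | h0
  · exact h0.false ⟨p, rfl⟩
  · exact (not_finite {q : {p // p ∈ D} // (T q + 1) / 2 = i}) 

end Generic

end R17
namespace R17

/-- The filling with `1'` at cell `(i, A i)` when `Sb i`, and `1` everywhere else. -/
def Tfill (D : Finset (ℤ × ℤ)) (A : ℕ → ℤ) (Sb : ℕ → Bool) : {p // p ∈ D} → ℕ :=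
  fun p => if p.val.2 = A p.val.1.toNat ∧ Sb p.val.1.toNat = true then 1 else 2

lemma anti_ext {L : ℕ} {f : ℕ → ℤ} (hf : ∀ i, i + 1 < L → f (i + 1) ≤ f i) :
    ∀ i j, i ≤ j → j < L → f j ≤ f i := by
  intro i j hij hjL
  induction j with
  | zero =>
      have : i = 0 := by omega
      subst this; exact le_refl _
  | succ k ih =>
      rcases Nat.eq_or_lt_of_le hij with rfl | hlt
      · exact le_refl _
      · exact (hf k hjL).trans (ih (by omega) (by omega))

lemma fill_valid {D : Finset (ℤ × ℤ)} {L : ℕ} {A B : ℕ → ℤ}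
    (hmem : ∀ r c : ℤ, (((r, c) : ℤ × ℤ) ∈ D) ↔
      ∃ i : ℕ, i < L ∧ r = (i : ℤ) ∧ A i ≤ c ∧ c < B i)
    (hA : ∀ i, i + 1 < L → A (i + 1) ≤ A i) (hB : ∀ i, i + 1 < L → B (i + 1) ≤ B i)
    (hTop : ∀ i, i + 1 < L → A i < B (i + 1) → B (i + 1) ≤ A i + 1)
    (Sb : ℕ → Bool) (hS : ∀ i, i + 1 < L → A i < B (i + 1) → Sb i = true) :
    IsWAT D (Tfill D A Sb) ∧
    ∀ i : ℕ, 1 ≤ i →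
      Nat.card {p : {p // p ∈ D} // (Tfill D A Sb p + 1) / 2 = i} =
        if i = 1 then D.card else 0 := by
  have hval : ∀ p, Tfill D A Sb p = 1 ∨ Tfill D A Sb p = 2 := by
    intro p; unfold Tfill; split
    · exact Or.inl rfl
    · exact Or.inr rfl
  have hone : ∀ (r c : ℤ) (h1 : ((r, c) : ℤ × ℤ) ∈ D) (h2 : ((r + 1, c) : ℤ × ℤ) ∈ D),
      Tfill D A Sb ⟨(r, c), h1⟩ = 1 := by
    intro r c h1 h2
    obtain ⟨i, hiL, hri, hAi, hBi⟩ := (hmem r c).1 h1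
    obtain ⟨j, hjL, hrj, hAj, hBj⟩ := (hmem (r + 1) c).1 h2
    have hj : j = i + 1 := by omega
    subst hj
    have hlt : A i < B (i + 1) := lt_of_le_of_lt hAi hBj
    have htop := hTop i (by omega) hlt
    have hc : c = A i := by omega
    have hSi := hS i (by omega) hlt
    unfold Tfill
    rw [if_pos (by simp [hri, hc, hSi])]
  have hrow : ∀ (r c : ℤ) (h1 : ((r, c) : ℤ × ℤ) ∈ D) (h2 : ((r, c + 1) : ℤ × ℤ) ∈ D),
      Tfill D A Sb ⟨(r, c), h1⟩ ≤ Tfill D A Sb ⟨(r, c + 1), h2⟩ := by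
    intro r c h1 h2
    obtain ⟨i, hiL, hri, hAi, hBi⟩ := (hmem r c).1 h1
    obtain ⟨j, hjL, hrj, hAj, hBj⟩ := (hmem r (c + 1)).1 h2
    have hj : j = i := by omega
    subst hj
    have h2v : Tfill D A Sb ⟨(r, c + 1), h2⟩ = 2 := by
      unfold Tfill
      rw [if_neg]
      rintro ⟨hcond, -⟩
      simp only [hri, Int.toNat_natCast] at hcond
      omega
    rcases hval ⟨(r, c), h1⟩ with hv | hv <;> omega
  have key : ∀ (a b : ℕ) (c : ℤ) (ha : (((a : ℤ), c) : ℤ × ℤ) ∈ D), a < b → b < L →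
      A a ≤ c → A b ≤ c → c < B b → Tfill D A Sb ⟨((a : ℤ), c), ha⟩ = 2 → False := by
    intro a b c ha hab hbL hAa hAb hBb hv2
    have h2 : ((((a : ℤ)) + 1, c) : ℤ × ℤ) ∈ D := by
      refine (hmem _ _).2 ⟨a + 1, by omega, by push_cast; ring, ?_, ?_⟩
      · exact le_trans (hA a (by omega)) hAa
      · exact lt_of_lt_of_le hBb (anti_ext hB (a + 1) b hab hbL)
    have := hone (a : ℤ) c ha h2
    omega
  refine ⟨⟨?_, hrow, ?_, ?_, ?_⟩, ?_⟩
  · intro p; rcases hval p with hv | hv <;> omega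
  · intro r c h1 h2
    have := hone r c h1 h2
    rcases hval ⟨(r + 1, c), h2⟩ with hv | hv <;> omega
  · -- at most one odd entry per row
    intro r i
    apply card_le_one_of_sub
    rintro ⟨⟨⟨r1, c1⟩, hp⟩, hp1, hp2⟩ ⟨⟨⟨r2, c2⟩, hq⟩, hq1, hq2⟩
    simp only at hp1 hq1 hp2 hq2
    unfold Tfill at hp2 hq2
    split at hp2
    case isFalse => omega
    case isTrue h1c =>
      split at hq2
      case isFalse => omega
      case isTrue h2c =>
        obtain ⟨hc1, -⟩ := h1c
        obtain ⟨hc2, -⟩ := h2c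
        simp only at hc1 hc2
        apply Subtype.ext; apply Subtype.ext
        simp only [Subtype.coe_mk, Prod.mk.injEq]
        subst hp1
        constructor
        · exact hq1.symm
        · rw [hc1, hc2, hq1]
  · -- at most one even entry per column
    intro c i
    apply card_le_one_of_sub
    rintro ⟨⟨⟨r1, c1⟩, hp⟩, hp1, hp2⟩ ⟨⟨⟨r2, c2⟩, hq⟩, hq1, hq2⟩
    simp only at hp1 hq1 hp2 hq2
    have hi0 : i = 0 := by
      rcases hval ⟨(r1, c1), hp⟩ with hv | hv <;> omega
    subst hi0
    have hv1 : Tfill D A Sb ⟨(r1, c1), hp⟩ = 2 := by omega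
    have hv2 : Tfill D A Sb ⟨(r2, c2), hq⟩ = 2 := by omega
    have hcc : c1 = c2 := by omega
    subst hcc
    obtain ⟨a, haL, hra, hAa, hBa⟩ := (hmem r1 c1).1 hp
    obtain ⟨b, hbL, hrb, hAb, hBb⟩ := (hmem r2 c1).1 hq
    rcases lt_trichotomy a b with hab | hab | hab
    · exfalso
      have hp' : (((a : ℤ), c1) : ℤ × ℤ) ∈ D := by rwa [hra] at hp
      have : Tfill D A Sb ⟨((a : ℤ), c1), hp'⟩ = 2 := by
        have : (⟨(r1, c1), hp⟩ : {p // p ∈ D}) = ⟨((a : ℤ), c1), hp'⟩ :=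
          Subtype.ext (show (r1, c1) = (((a : ℤ)), c1) by rw [hra])
        rwa [this] at hv1
      exact key a b c1 hp' hab hbL hAa hAb hBb this
    · apply Subtype.ext; apply Subtype.ext
      show (r1, c1) = (r2, c1)
      rw [hra, hrb, hab]
    · exfalso
      have hq' : (((b : ℤ), c1) : ℤ × ℤ) ∈ D := by rwa [hrb] at hq
      have : Tfill D A Sb ⟨((b : ℤ), c1), hq'⟩ = 2 := by
        have : (⟨(r2, c1), hq⟩ : {p // p ∈ D}) = ⟨((b : ℤ), c1), hq'⟩ :=
          Subtype.ext (show (r2, c1) = (((b : ℤ)), c1) by rw [hrb])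
        rwa [this] at hv2
      exact key b a c1 hq' hab haL hAb hAa hBa this
  · -- content of the filling
    intro i hi
    rcases eq_or_lt_of_le hi with hi1 | hi2
    · rw [if_pos hi1.symm]
      subst hi1
      have hall : ∀ p : {p // p ∈ D}, (Tfill D A Sb p + 1) / 2 = 1 := by
        intro p; rcases hval p with hv | hv <;> simp [hv]
      rw [Nat.card_congr (Equiv.subtypeUnivEquiv hall), Nat.card_eq_finsetCard]
    · rw [if_neg (by omega)]
      have hemp : IsEmpty {p : {p // p ∈ D} // (Tfill D A Sb p + 1) / 2 = i} := by
        constructor; rintro ⟨p, hpv⟩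
        rcases hval p with hv | hv <;> (rw [hv] at hpv; omega)
      exact Nat.card_eq_zero.2 (Or.inl hemp)

end R17
namespace R17

lemma getD_pos {α : List ℕ} (hα : ∀ a ∈ α, 0 < a) {i : ℕ} (hi : i < α.length) :
    0 < α.getD i 0 := by
  rw [List.getD_eq_getElem _ _ hi]
  exact hα _ (List.getElem_mem _)

/-- The set of WATs with content vanishing in degrees `≥ 2` is finite. -/
lemma finite_QT {D : Finset (ℤ × ℤ)} {m : ℕ → ℕ} (hm : ∀ i, 2 ≤ i → m i = 0) :
    Finite {T : {p // p ∈ D} → ℕ // IsWAT D T ∧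
      ∀ i : ℕ, 1 ≤ i → Nat.card {p : {p // p ∈ D} // (T p + 1) / 2 = i} = m i} := by
  apply Finite.of_injective (β := {p // p ∈ D} → Bool) (fun T => fun p => decide (T.1 p = 1))
  intro T T' heq
  apply Subtype.ext; funext p
  have h1 := values_12 T.2.1 T.2.2 hm p
  have h2 := values_12 T'.2.1 T'.2.2 hm p
  have hthis := congrFun heq p
  simp only [decide_eq_decide] at hthis
  rcases h1 with h1 | h1 <;> rcases h2 with h2 | h2
  · rw [h1, h2]
  · rw [h1, h2] at hthis; simp at hthis
  · rw [h1, h2] at hthis; simp at hthis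
  · rw [h1, h2]

section Ribbon

variable {α : List ℕ}

lemma ribbon_hmem : ∀ r c : ℤ, (((r, c) : ℤ × ℤ) ∈ ribbonSet α) ↔
    ∃ i : ℕ, i < α.length ∧ r = (i : ℤ) ∧ rstart α i ≤ c ∧
      c < rstart α i + (α.getD i 0 : ℤ) := fun _ _ => mem_ribbon

lemma ribbon_hA (hα : IsComposition α) :
    ∀ i, i + 1 < α.length → rstart α (i + 1) ≤ rstart α i := by
  intro i hi
  have h1 := rstart_succ hi
  have h2 := getD_pos hα.2 hi
  omega

lemma ribbon_hB (hα : IsComposition α) : ∀ i, i + 1 < α.length →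
    rstart α (i + 1) + (α.getD (i + 1) 0 : ℤ) ≤ rstart α i + (α.getD i 0 : ℤ) := by
  intro i hi
  have h1 := rstart_succ hi
  have h2 := getD_pos hα.2 (show i < α.length by omega)
  omega

lemma ribbon_hTop : ∀ i, i + 1 < α.length →
    rstart α i < rstart α (i + 1) + (α.getD (i + 1) 0 : ℤ) →
    rstart α (i + 1) + (α.getD (i + 1) 0 : ℤ) ≤ rstart α i + 1 := by
  intro i hi _
  have h1 := rstart_succ hi
  omega

lemma ribbon_QCoeff_pos (hα : IsComposition α) :
    1 ≤ QCoeff (ribbonSet α) (fun i => if i = 1 then (ribbonSet α).card else 0) := by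
  have hfv := fill_valid ribbon_hmem (ribbon_hA hα) (ribbon_hB hα) ribbon_hTop
    (fun _ => true) (fun _ _ _ => rfl)
  unfold QCoeff
  have hfin := finite_QT (D := ribbonSet α)
    (m := fun i => if i = 1 then (ribbonSet α).card else 0)
    (by intro i hi; simp only [if_neg (by omega : ¬ i = 1)])
  exact Nat.card_pos_iff.mpr ⟨⟨⟨Tfill (ribbonSet α) (rstart α) (fun _ => true),
    hfv.1, hfv.2⟩⟩, hfin⟩

lemma ribbon_QCoeff_le_two (hα : IsComposition α) {m : ℕ → ℕ} (hm : ∀ i, 2 ≤ i → m i = 0) :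
    QCoeff (ribbonSet α) m ≤ 2 := by
  set L := α.length with hLdef
  have hL : 0 < L := List.length_pos_iff.2 hα.1
  have hlastmem : (((L - 1 : ℕ) : ℤ), rstart α (L - 1)) ∈ ribbonSet α :=
    mem_ribbon.2 ⟨L - 1, by omega, rfl, le_refl _, by
      have := getD_pos hα.2 (show L - 1 < α.length by omega); omega⟩
  set lastcell : {p // p ∈ ribbonSet α} := ⟨(((L - 1 : ℕ) : ℤ), rstart α (L - 1)), hlastmem⟩
    with hlastdef
  have determined : ∀ (T : {p // p ∈ ribbonSet α} → ℕ), IsWAT (ribbonSet α) T →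
      (∀ p, T p = 1 ∨ T p = 2) → ∀ p, T p =
        if p.val.2 = rstart α p.val.1.toNat ∧ (p.val.1.toNat + 1 < L ∨ T lastcell = 1)
        then 1 else 2 := by
    rintro T hT hval ⟨⟨r, c⟩, hp⟩
    obtain ⟨i, hiL, hri, hAi, hBi⟩ := mem_ribbon.1 hp
    subst hri
    simp only [Int.toNat_natCast]
    by_cases hc : c = rstart α i
    · by_cases hi1 : i + 1 < L
      · rw [if_pos ⟨hc, Or.inl hi1⟩]
        have hbelow : ((((i : ℤ)) + 1, c) : ℤ × ℤ) ∈ ribbonSet α := by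
          refine mem_ribbon.2 ⟨i + 1, hi1, by push_cast; ring, ?_, ?_⟩ <;>
          · have h1 := rstart_succ (show i + 1 < α.length from hi1)
            have h2 := getD_pos hα.2 (show i + 1 < α.length from hi1)
            omega
        exact top_one hT hval hp hbelow
      · have hieq : i = L - 1 := by omega
        subst hieq
        have hpeq : (⟨(((L - 1 : ℕ) : ℤ), c), hp⟩ : {p // p ∈ ribbonSet α}) = lastcell :=
          Subtype.ext (show (((L - 1 : ℕ) : ℤ), c) = (((L - 1 : ℕ) : ℤ), rstart α (L - 1)) by
            rw [hc])
        by_cases hlast1 : T lastcell = 1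
        · rw [if_pos ⟨hc, Or.inr hlast1⟩, hpeq]
          exact hlast1
        · rw [if_neg (by rintro ⟨-, hor | hor⟩; omega; exact hlast1 hor)]
          rw [hpeq]
          rcases hval lastcell with hv | hv
          · exact absurd hv hlast1
          · exact hv
    · rw [if_neg (by rintro ⟨hcc, -⟩; exact hc hcc)]
      rcases hval ⟨((i : ℤ), c), hp⟩ with hv | hv
      · exfalso
        have h0 : ((((i : ℤ)), c - 1) : ℤ × ℤ) ∈ ribbonSet α :=
          mem_ribbon.2 ⟨i, hiL, rfl, by omega, by omega⟩
        have h1 : ((((i : ℤ)), (c - 1) + 1) : ℤ × ℤ) ∈ ribbonSet α := by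
          rw [sub_add_cancel]; exact hp
        have hsub : (⟨((i : ℤ), (c - 1) + 1), h1⟩ : {p // p ∈ ribbonSet α}) =
            ⟨((i : ℤ), c), hp⟩ :=
          Subtype.ext (show ((i : ℤ), (c - 1) + 1) = ((i : ℤ), c) by rw [sub_add_cancel])
        exact no_left_of_one hT h0 h1 (by rw [hsub]; exact hv)
      · exact hv
  unfold QCoeff
  have hcb : Nat.card Bool = 2 := by simp [Nat.card_eq_fintype_card]
  have hinj : Function.Injective
      (fun (T : {T : {p // p ∈ ribbonSet α} → ℕ // IsWAT (ribbonSet α) T ∧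
        ∀ i : ℕ, 1 ≤ i →
          Nat.card {p : {p // p ∈ ribbonSet α} // (T p + 1) / 2 = i} = m i}) =>
        decide (T.1 lastcell = 1)) := by
    intro T T' heq
    simp only [decide_eq_decide] at heq
    have hval := values_12 T.2.1 T.2.2 hm
    have hval' := values_12 T'.2.1 T'.2.2 hm
    have hlast : T.1 lastcell = T'.1 lastcell := by
      rcases hval lastcell with h1 | h1 <;> rcases hval' lastcell with h2 | h2 <;>
        rw [h1, h2] <;> rw [h1, h2] at heq <;> simp at heq
    apply Subtype.ext; funext p
    rw [determined T.1 T.2.1 hval p, determined T'.1 T'.2.1 hval' p, hlast]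
  exact le_trans (Nat.card_le_card_of_injective _ hinj) (le_of_eq hcb)

end Ribbon

end R17
namespace R17

lemma chain_getD {l : List ℕ} (hl : l.Chain' (· > ·)) {i : ℕ} (hi : i + 1 < l.length) :
    l.getD (i + 1) 0 < l.getD i 0 := by
  rw [List.getD_eq_getElem l 0 hi, List.getD_eq_getElem l 0 (by omega)]
  exact List.isChain_iff_getElem.1 hl i (by omega)

/-- left end of row `i` of the shifted diagram -/
def sA (mu : List ℕ) (i : ℕ) : ℤ := (i : ℤ) + (mu.getD i 0 : ℤ)

/-- right end (exclusive) of row `i` of the shifted diagram -/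
def sB (lam : List ℕ) (i : ℕ) : ℤ := (i : ℤ) + (lam.getD i 0 : ℤ)

lemma shifted_hmem {lam mu : List ℕ} : ∀ r c : ℤ,
    (((r, c) : ℤ × ℤ) ∈ shiftedDiagram lam mu) ↔
    ∃ i : ℕ, i < lam.length ∧ r = (i : ℤ) ∧ sA mu i ≤ c ∧ c < sB lam i := by
  intro r c
  simpa [sA, sB] using (mem_shifted (lam := lam) (mu := mu) (r := r) (c := c))

lemma shifted_hA {lam mu : List ℕ} (hmu : IsStrictPartition mu)
    (hML : ∀ i, i + 1 < lam.length → i < mu.length) :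
    ∀ i, i + 1 < lam.length → sA mu (i + 1) ≤ sA mu i := by
  intro i hi
  have hiM : i < mu.length := hML i hi
  have hpos : 0 < mu.getD i 0 := getD_pos hmu.2 hiM
  by_cases hi1M : i + 1 < mu.length
  · have := chain_getD hmu.1 hi1M
    simp only [sA]; push_cast; omega
  · have hz : mu.getD (i + 1) 0 = 0 := List.getD_eq_default mu 0 (by omega)
    simp only [sA, hz]; push_cast; omega

lemma shifted_hB {lam : List ℕ} (hlam : IsStrictPartition lam) :
    ∀ i, i + 1 < lam.length → sB lam (i + 1) ≤ sB lam i := by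
  intro i hi
  have := chain_getD hlam.1 hi
  simp only [sB]; push_cast; omega

lemma mu_le_lam {lam mu : List ℕ} (hsubL : mu.length ≤ lam.length)
    (hsubd : ∀ i < mu.length, mu.getD i 0 ≤ lam.getD i 0) :
    ∀ i, mu.getD i 0 ≤ lam.getD i 0 := by
  intro i
  by_cases hi : i < mu.length
  · exact hsubd i hi
  · rw [List.getD_eq_default mu 0 (by omega)]; omega

end R17
open R17 in
/-- if the skew Schur Q-function `Q_{λ/μ}` (for strict partitions `μ ⊆ λ`)
equals a ribbon Schur Q-function `𝔯_α` — i.e. all coefficients agree — then the shifted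
diagram of `λ/μ` is a ribbon. -/
theorem shifted_is_ribbon_of_eq_ribbonQ (lam mu : List ℕ)
    (hlam : IsStrictPartition lam) (hmu : IsStrictPartition mu)
    (hsub : mu.length ≤ lam.length ∧ ∀ i < mu.length, mu.getD i 0 ≤ lam.getD i 0)
    (α : List ℕ) (hα : IsComposition α)
    (h : ∀ m : ℕ → ℕ, QCoeff (shiftedDiagram lam mu) m = QCoeff (ribbonSet α) m) :
    IsRibbonDiagram (shiftedDiagram lam mu) := by
  classical
  obtain ⟨hsubL, hsubd⟩ := hsub
  set D := shiftedDiagram lam mu with hDdef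
  set L := lam.length with hLdef
  set M := mu.length with hMdef
  set n := (ribbonSet α).card with hndef
  set m1 : ℕ → ℕ := fun i => if i = 1 then n else 0 with hm1def
  have hm0 : ∀ i, 2 ≤ i → m1 i = 0 := by
    intro i hi; simp only [m1, if_neg (by omega : ¬ i = 1)]
  have hub' : QCoeff (ribbonSet α) m1 ≤ 2 := ribbon_QCoeff_le_two hα hm0
  have hlb' : 1 ≤ QCoeff (ribbonSet α) m1 := ribbon_QCoeff_pos hα
  have heqc := h m1
  have hDub : QCoeff D m1 ≤ 2 := by rw [hDdef, heqc]; exact hub'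
  have hDlb : 1 ≤ QCoeff D m1 := by rw [hDdef, heqc]; exact hlb'
  have hmemD : ∀ r c : ℤ, (((r, c) : ℤ × ℤ) ∈ D) ↔
      ∃ i : ℕ, i < L ∧ r = (i : ℤ) ∧ sA mu i ≤ c ∧ c < sB lam i := shifted_hmem
  have hneT : Nonempty {T : {p // p ∈ D} → ℕ // IsWAT D T ∧
      ∀ i : ℕ, 1 ≤ i → Nat.card {p : {p // p ∈ D} // (T p + 1) / 2 = i} = m1 i} := by
    by_contra hcon
    rw [not_nonempty_iff] at hcon
    have hzero : QCoeff D m1 = 0 := by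
      unfold QCoeff; exact Nat.card_eq_zero.2 (Or.inl hcon)
    omega
  obtain ⟨⟨T₀, hT₀, hc₀⟩⟩ := hneT
  have hval₀ := values_12 hT₀ hc₀ hm0
  have hstar : ∀ r c : ℤ, (((r, c - 1) : ℤ × ℤ) ∈ D) → (((r, c) : ℤ × ℤ) ∈ D) →
      (((r + 1, c) : ℤ × ℤ) ∈ D) → False := fun r c h0 h1 h2 => no_bad hT₀ hval₀ h0 h1 h2
  have hcard : D.card = n := by
    have h1 := hc₀ 1 (le_refl 1)
    have hall : ∀ p : {p // p ∈ D}, (T₀ p + 1) / 2 = 1 := by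
      intro p; rcases hval₀ p with hv | hv <;> simp [hv]
    rw [Nat.card_congr (Equiv.subtypeUnivEquiv hall), Nat.card_eq_finsetCard] at h1
    simpa [m1] using h1
  have hnpos : 0 < n := by
    refine Finset.card_pos.2 ⟨((0 : ℤ), rstart α 0), mem_ribbon.2 ⟨0, ?_, rfl, le_refl _, ?_⟩⟩
    · exact List.length_pos_iff.2 hα.1
    · have := getD_pos hα.2 (List.length_pos_iff.2 hα.1); omega
  have hML : ∀ i, i + 1 < L → i < M := by
    intro i hi1
    by_contra hiM
    push_neg at hiM
    have hmui : mu.getD i 0 = 0 := List.getD_eq_default mu 0 (by omega)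
    have hmui1 : mu.getD (i + 1) 0 = 0 := List.getD_eq_default mu 0 (by omega)
    have hl1 : 0 < lam.getD (i + 1) 0 := getD_pos hlam.2 hi1
    have hl0 : lam.getD (i + 1) 0 < lam.getD i 0 := chain_getD hlam.1 hi1
    refine hstar (i : ℤ) ((i : ℤ) + 1) ?_ ?_ ?_
    · exact (hmemD _ _).2 ⟨i, by omega, rfl,
        by simp only [sA, sB, hmui]; push_cast; omega,
        by simp only [sA, sB, hmui]; push_cast; omega⟩
    · exact (hmemD _ _).2 ⟨i, by omega, rfl,
        by simp only [sA, sB, hmui]; push_cast; omega,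
        by simp only [sA, sB, hmui]; push_cast; omega⟩
    · exact (hmemD _ _).2 ⟨i + 1, by omega, by push_cast; ring,
        by simp only [sA, sB, hmui1]; push_cast; omega,
        by simp only [sA, sB, hmui1]; push_cast; omega⟩
  have hApr : ∀ i, i + 1 < L → sA mu (i + 1) ≤ sA mu i := shifted_hA hmu hML
  have hBpr : ∀ i, i + 1 < L → sB lam (i + 1) ≤ sB lam i := shifted_hB hlam
  have hTopD : ∀ i, i + 1 < L → sA mu i < sB lam (i + 1) → sB lam (i + 1) ≤ sA mu i + 1 := by
    intro i hi hlt
    by_contra hcon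
    push_neg at hcon
    have hBi : sB lam (i + 1) ≤ sB lam i := hBpr i hi
    have hAi : sA mu (i + 1) ≤ sA mu i := hApr i hi
    refine hstar (i : ℤ) (sA mu i + 1) ?_ ?_ ?_
    · exact (hmemD _ _).2 ⟨i, by omega, rfl, by omega, by omega⟩
    · exact (hmemD _ _).2 ⟨i, by omega, rfl, by omega, by omega⟩
    · exact (hmemD _ _).2 ⟨i + 1, by omega, by push_cast; ring, by omega, by omega⟩
  -- the set of nonempty rows
  set R : Finset ℕ := (Finset.range L).filter (fun i => sA mu i < sB lam i) with hRdef
  have hRne : R.Nonempty := by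
    have hDne : D.Nonempty := Finset.card_pos.1 (by omega)
    obtain ⟨⟨r, c⟩, hcell⟩ := hDne
    obtain ⟨i, hiL, hri, hAi, hBi⟩ := (hmemD r c).1 hcell
    exact ⟨i, Finset.mem_filter.2 ⟨Finset.mem_range.2 hiL, by omega⟩⟩
  obtain ⟨r₀, hr₀R, hr₀min⟩ : ∃ x, x ∈ R ∧ ∀ y ∈ R, x ≤ y :=
    ⟨R.min' hRne, R.min'_mem hRne, fun y hy => R.min'_le y hy⟩
  obtain ⟨r₁, hr₁R, hr₁max⟩ : ∃ x, x ∈ R ∧ ∀ y ∈ R, y ≤ x :=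
    ⟨R.max' hRne, R.max'_mem hRne, fun y hy => R.le_max' y hy⟩
  have hr₀f := Finset.mem_filter.1 hr₀R
  have hr₀L : r₀ < L := Finset.mem_range.1 hr₀f.1
  have hr₀ne : sA mu r₀ < sB lam r₀ := by simpa using hr₀f.2
  have hr₁f := Finset.mem_filter.1 hr₁R
  have hr₁L : r₁ < L := Finset.mem_range.1 hr₁f.1
  have hr₁ne : sA mu r₁ < sB lam r₁ := by simpa using hr₁f.2
  have hr01 : r₀ ≤ r₁ := hr₀min r₁ hr₁R
  have hmemRR : ∀ i, i < L → sA mu i < sB lam i → (r₀ ≤ i ∧ i ≤ r₁) := by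
    intro i hiL hne
    have hiR : i ∈ R := Finset.mem_filter.2 ⟨Finset.mem_range.2 hiL, by simpa using hne⟩
    exact ⟨hr₀min i hiR, hr₁max i hiR⟩
  have hfinD := finite_QT (D := D) (m := m1) hm0
  haveI := hfinD
  -- connectivity
  have hconn : ∀ r, r₀ ≤ r → r < r₁ →
      sA mu r < sB lam r ∧ sA mu (r + 1) < sB lam (r + 1) ∧ sA mu r < sB lam (r + 1) := by
    intro r hrr0 hrr1
    by_contra hfail
    have hr1L : r + 1 < L := by omega
    have hnodom : ∀ c : ℤ, ¬ ((((r : ℤ), c) : ℤ × ℤ) ∈ D ∧ (((r : ℤ) + 1, c) : ℤ × ℤ) ∈ D) := by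
      rintro c ⟨hc1, hc2⟩
      obtain ⟨i, hiL, hri, hAi, hBi⟩ := (hmemD _ _).1 hc1
      obtain ⟨j, hjL, hrj, hAj, hBj⟩ := (hmemD _ _).1 hc2
      have hii : i = r := by omega
      have hjj : j = r + 1 := by omega
      subst hii
      subst hjj
      exact hfail ⟨by omega, by omega, by omega⟩
    obtain ⟨u, huRu, humax⟩ : ∃ x, x ∈ (Finset.range (r + 1)).filter
        (fun i => sA mu i < sB lam i) ∧
        ∀ y ∈ (Finset.range (r + 1)).filter (fun i => sA mu i < sB lam i), y ≤ x := by
      have hne : ((Finset.range (r + 1)).filter (fun i => sA mu i < sB lam i)).Nonempty :=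
        ⟨r₀, Finset.mem_filter.2 ⟨Finset.mem_range.2 (by omega), by simpa using hr₀ne⟩⟩
      exact ⟨_, Finset.max'_mem _ hne, fun y hy => Finset.le_max' _ y hy⟩
    have huf := Finset.mem_filter.1 huRu
    have hur : u ≤ r := by have := Finset.mem_range.1 huf.1; omega
    have hune : sA mu u < sB lam u := by simpa using huf.2
    -- the three fillings
    set Sb0 : ℕ → Bool := fun i => decide (i + 1 < L ∧ sA mu i < sB lam (i + 1)) with hSb0def
    set Sb1 : ℕ → Bool := fun i => Sb0 i || decide (i = u) with hSb1def
    set Sb2 : ℕ → Bool := fun i => Sb0 i || decide (i = r₁) with hSb2def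
    have hS0 : ∀ i, i + 1 < L → sA mu i < sB lam (i + 1) → Sb0 i = true := by
      intro i h1 h2; simp [Sb0, h1, h2]
    have hS1 : ∀ i, i + 1 < L → sA mu i < sB lam (i + 1) → Sb1 i = true := by
      intro i h1 h2; simp [Sb1, hS0 i h1 h2]
    have hS2 : ∀ i, i + 1 < L → sA mu i < sB lam (i + 1) → Sb2 i = true := by
      intro i h1 h2; simp [Sb2, hS0 i h1 h2]
    have hfv0 := fill_valid hmemD hApr hBpr hTopD Sb0 hS0
    have hfv1 := fill_valid hmemD hApr hBpr hTopD Sb1 hS1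
    have hfv2 := fill_valid hmemD hApr hBpr hTopD Sb2 hS2
    have hSb0u : Sb0 u = false := by
      simp only [Sb0, decide_eq_false_iff_not, not_and]
      intro h1 h2
      have hrow : sA mu (u + 1) < sB lam (u + 1) := lt_of_le_of_lt (hApr u h1) h2
      rcases Nat.lt_or_ge u r with hult | huge
      · have hmm : u + 1 ∈ (Finset.range (r + 1)).filter (fun i => sA mu i < sB lam i) :=
          Finset.mem_filter.2 ⟨Finset.mem_range.2 (by omega), by simpa using hrow⟩
        have := humax _ hmm
        omega
      · have hur' : u = r := by omega
        subst hur'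
        exact hnodom (sA mu u) ⟨(hmemD _ _).2 ⟨u, by omega, rfl, le_refl _, hune⟩,
          (hmemD _ _).2 ⟨u + 1, by omega, by push_cast; ring, le_trans (hApr u h1) (le_refl _), h2⟩⟩
    have hSb0r₁ : Sb0 r₁ = false := by
      simp only [Sb0, decide_eq_false_iff_not, not_and]
      intro h1 h2
      have hrow : sA mu (r₁ + 1) < sB lam (r₁ + 1) := lt_of_le_of_lt (hApr r₁ h1) h2
      have := (hmemRR (r₁ + 1) h1 hrow).2
      omega
    have hur₁ : u ≠ r₁ := by omega
    have humem : (((u : ℤ), sA mu u) : ℤ × ℤ) ∈ D :=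
      (hmemD _ _).2 ⟨u, by omega, rfl, le_refl _, hune⟩
    have hr₁mem : (((r₁ : ℤ), sA mu r₁) : ℤ × ℤ) ∈ D :=
      (hmemD _ _).2 ⟨r₁, by omega, rfl, le_refl _, hr₁ne⟩
    have hv0u : Tfill D (sA mu) Sb0 ⟨((u : ℤ), sA mu u), humem⟩ = 2 := by
      unfold Tfill
      rw [if_neg]
      rintro ⟨-, hS⟩
      simp only [Int.toNat_natCast] at hS
      rw [hSb0u] at hS
      exact Bool.false_ne_true hS
    have hv1u : Tfill D (sA mu) Sb1 ⟨((u : ℤ), sA mu u), humem⟩ = 1 := by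
      unfold Tfill
      rw [if_pos ⟨by simp, by simp [Sb1]⟩]
    have hv2u : Tfill D (sA mu) Sb2 ⟨((u : ℤ), sA mu u), humem⟩ = 2 := by
      unfold Tfill
      rw [if_neg]
      rintro ⟨-, hS⟩
      simp only [Int.toNat_natCast, Sb2, hSb0u, Bool.false_or, decide_eq_true_eq] at hS
      exact hur₁ hS
    have hv0r : Tfill D (sA mu) Sb0 ⟨((r₁ : ℤ), sA mu r₁), hr₁mem⟩ = 2 := by
      unfold Tfill
      rw [if_neg]
      rintro ⟨-, hS⟩
      simp only [Int.toNat_natCast] at hS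
      rw [hSb0r₁] at hS
      exact Bool.false_ne_true hS
    have hv2r : Tfill D (sA mu) Sb2 ⟨((r₁ : ℤ), sA mu r₁), hr₁mem⟩ = 1 := by
      unfold Tfill
      rw [if_pos ⟨by simp, by simp [Sb2]⟩]
    -- the three elements of the counting set
    have hcont : ∀ Sb : ℕ → Bool,
        (∀ i : ℕ, 1 ≤ i → Nat.card {p : {p // p ∈ D} // (Tfill D (sA mu) Sb p + 1) / 2 = i} =
          if i = 1 then D.card else 0) →
        ∀ i : ℕ, 1 ≤ i → Nat.card {p : {p // p ∈ D} // (Tfill D (sA mu) Sb p + 1) / 2 = i} =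
          m1 i := by
      intro Sb hc i hi
      rw [hc i hi, hcard]
    set QT := {T : {p // p ∈ D} → ℕ // IsWAT D T ∧
      ∀ i : ℕ, 1 ≤ i → Nat.card {p : {p // p ∈ D} // (T p + 1) / 2 = i} = m1 i} with hQTdef
    set E0 : QT := ⟨Tfill D (sA mu) Sb0, hfv0.1, hcont Sb0 hfv0.2⟩ with hE0def
    set E1 : QT := ⟨Tfill D (sA mu) Sb1, hfv1.1, hcont Sb1 hfv1.2⟩ with hE1def
    set E2 : QT := ⟨Tfill D (sA mu) Sb2, hfv2.1, hcont Sb2 hfv2.2⟩ with hE2def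
    have hne01 : E0 ≠ E1 := by
      intro heq
      have hvv : Tfill D (sA mu) Sb0 ⟨((u : ℤ), sA mu u), humem⟩ = Tfill D (sA mu) Sb1 ⟨((u : ℤ), sA mu u), humem⟩ :=
        congrFun (congrArg Subtype.val heq) ⟨((u : ℤ), sA mu u), humem⟩
      rw [hv0u, hv1u] at hvv
      omega
    have hne02 : E0 ≠ E2 := by
      intro heq
      have hvv : Tfill D (sA mu) Sb0 ⟨((r₁ : ℤ), sA mu r₁), hr₁mem⟩ = Tfill D (sA mu) Sb2 ⟨((r₁ : ℤ), sA mu r₁), hr₁mem⟩ :=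
        congrFun (congrArg Subtype.val heq) ⟨((r₁ : ℤ), sA mu r₁), hr₁mem⟩
      rw [hv0r, hv2r] at hvv
      omega
    have hne12 : E1 ≠ E2 := by
      intro heq
      have hvv : Tfill D (sA mu) Sb1 ⟨((u : ℤ), sA mu u), humem⟩ = Tfill D (sA mu) Sb2 ⟨((u : ℤ), sA mu u), humem⟩ :=
        congrFun (congrArg Subtype.val heq) ⟨((u : ℤ), sA mu u), humem⟩
      rw [hv1u, hv2u] at hvv
      omega
    haveI : Fintype QT := Fintype.ofFinite QT
    have h3 : 3 ≤ Nat.card QT := by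
      rw [Nat.card_eq_fintype_card]
      have hc3 : ({E0, E1, E2} : Finset QT).card = 3 := by
        rw [Finset.card_insert_of_notMem (by simp [hne01, hne02]),
          Finset.card_insert_of_notMem (by simp [hne12]), Finset.card_singleton]
      calc 3 = ({E0, E1, E2} : Finset QT).card := hc3.symm
        _ ≤ Fintype.card QT := Finset.card_le_univ _
    have : QCoeff D m1 = Nat.card QT := rfl
    omega
  -- rows r₀..r₁ are all nonempty
  have hrowne : ∀ j, r₀ ≤ j → j ≤ r₁ → sA mu j < sB lam j := by
    intro j h1 h2
    rcases Nat.lt_or_ge j r₁ with hj | hj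
    · exact (hconn j h1 hj).1
    · have hj' : j = r₁ := by omega
      subst hj'
      exact hr₁ne
  have hBA : ∀ k, r₀ ≤ k → k < r₁ → sB lam (k + 1) = sA mu k + 1 := by
    intro k h1 h2
    have hc := (hconn k h1 h2).2.2
    have := hTopD k (by omega) hc
    omega
  set K := r₁ + 1 - r₀ with hKdef
  have hK : 0 < K := by omega
  set β : List ℕ := (List.range K).map (fun k => lam.getD (r₀ + k) 0 - mu.getD (r₀ + k) 0)
    with hβdef
  have hβlen : β.length = K := by simp [β]
  have hβgetD : ∀ k, k < K → (β.getD k 0 : ℤ) = sB lam (r₀ + k) - sA mu (r₀ + k) := by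
    intro k hk
    rw [List.getD_eq_getElem β 0 (by omega)]
    simp only [β, List.getElem_map, List.getElem_range]
    have hle := mu_le_lam hsubL hsubd (r₀ + k)
    simp only [sA, sB]
    push_cast [hle]
    ring
  have hβpos : ∀ a ∈ β, 0 < a := by
    intro a ha
    simp only [β, List.mem_map, List.mem_range] at ha
    obtain ⟨k, hk, rfl⟩ := ha
    have := hrowne (r₀ + k) (by omega) (by omega)
    simp only [sA, sB] at this
    omega
  have hβne : β ≠ [] := by
    intro hnil
    rw [hnil] at hβlen
    simp at hβlen
    omega
  have hstart : ∀ d, d < K → rstart β (K - 1 - d) + sA mu r₁ = sA mu (r₀ + (K - 1 - d)) := by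
    intro d
    induction d with
    | zero =>
      intro _
      simp only [Nat.sub_zero]
      have hdrop : β.drop (K - 1 + 1) = [] := List.drop_eq_nil_of_le (by omega)
      have hz : rstart β (K - 1) = 0 := by
        unfold rstart
        rw [hdrop, hβlen]
        simp only [List.sum_nil, Nat.cast_zero]
        omega
      rw [hz, show r₀ + (K - 1) = r₁ from by omega]
      ring
    | succ e ih =>
      intro hd
      have hke : K - 1 - e = (K - 1 - (e + 1)) + 1 := by omega
      have h1 := rstart_succ (α := β) (i := K - 1 - (e + 1)) (by rw [hβlen]; omega)
      have h2 := ih (by omega)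
      rw [hke] at h2
      have h3 := hBA (r₀ + (K - 1 - (e + 1))) (by omega) (by omega)
      have h4 := hβgetD (K - 1 - (e + 1) + 1) (by omega)
      have h5 : r₀ + (K - 1 - (e + 1)) + 1 = r₀ + (K - 1 - (e + 1) + 1) := by omega
      rw [h5] at h3
      omega
  have hstartk : ∀ k, k < K → rstart β k + sA mu r₁ = sA mu (r₀ + k) := by
    intro k hk
    have := hstart (K - 1 - k) (by omega)
    rwa [show K - 1 - (K - 1 - k) = k from by omega] at this
  refine ⟨β, ((r₀ : ℤ), sA mu r₁), ⟨hβne, hβpos⟩, ?_⟩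
  apply Finset.ext
  rintro ⟨r, c⟩
  simp only [cellsTranslate, Finset.mem_image]
  constructor
  · intro hcell
    obtain ⟨i, hiL, hri, hAi, hBi⟩ := (hmemD r c).1 hcell
    have hir : r₀ ≤ i ∧ i ≤ r₁ := hmemRR i hiL (by omega)
    refine ⟨(((i - r₀ : ℕ) : ℤ), c - sA mu r₁), ?_, ?_⟩
    · apply mem_ribbon.2
      refine ⟨i - r₀, by rw [hβlen]; omega, rfl, ?_, ?_⟩
      · have hs := hstartk (i - r₀) (by omega)
        rw [show r₀ + (i - r₀) = i from by omega] at hs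
        omega
      · have hs := hstartk (i - r₀) (by omega)
        have hg := hβgetD (i - r₀) (by omega)
        rw [show r₀ + (i - r₀) = i from by omega] at hs hg
        omega
    · have : ((((i - r₀ : ℕ) : ℤ)) + (r₀ : ℤ), (c - sA mu r₁) + sA mu r₁) = ((r : ℤ), c) := by
        rw [Prod.mk.injEq]
        exact ⟨by omega, by ring⟩
      exact this
  · rintro ⟨⟨qr, qc⟩, hq, heq2⟩
    obtain ⟨k, hkK, hqr, hq1, hq2⟩ := mem_ribbon.1 hq
    rw [hβlen] at hkK
    have her : qr + (r₀ : ℤ) = r := congrArg Prod.fst heq2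
    have hec : qc + sA mu r₁ = c := congrArg Prod.snd heq2
    apply (hmemD r c).2
    have hs := hstartk k hkK
    have hg := hβgetD k hkK
    exact ⟨r₀ + k, by omega, by omega, by omega, by omega⟩
end
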